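/- In the setup below, there exist constants K' ≥ 1 and C' ≥ 0 depending only on D, δ and L, and a map Φ: X → X, such that: (1) Φ(x) = x for all x ∈ X_y(3D) ∪ X_z(3D), and consequently the induced boundary map of Φ is the identity on ∂X; (2) the displacement sup_{x∈X} d(x, Φ(x)) is at least l/3, where l = d(y',z') and [y',z'] is the largest subsegment of [y,z] lying outside the 3D-neighborhood of {y,z}; (3) the image Φ(X) is (L+3δ)-roughly full in X, i.e. the (L+3δ)-neighborhood of Φ(X) equals X; (4) Φ is a (K',C')-quasi-isometry of X. -/
import Mathlib


open Metric Filter Set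

namespace BoundaryRigidity

universe u

variable {X : Type*} {Y : Type*}

/-- The Gromov product of `x` and `y` with respect to the base point `w`. -/
noncomputable def gp [MetricSpace X] (w x y : X) : ℝ :=
  (dist x w + dist y w - dist x y) / 2

/-- A Gromov sequence: `(x_i | x_j)_w → ∞` as `i, j → ∞` (for every base point,
the condition being base-point independent). -/
def IsGromovSeq [MetricSpace X] (u : ℕ → X) : Prop :=
  ∀ w : X, Tendsto (fun p : ℕ × ℕ => gp w (u p.1) (u p.2)) atTop atTop

/-- Two Gromov sequences are equivalent if `(x_i | y_i)_w → ∞`. -/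
def GromovEquiv [MetricSpace X] (u v : ℕ → X) : Prop :=
  IsGromovSeq u ∧ IsGromovSeq v ∧
    ∀ w : X, Tendsto (fun i => gp w (u i) (v i)) atTop atTop

/-- `γ` is a geodesic (unit-speed) parametrization on the interval `[a, b]`. -/
def IsGeodSegment [MetricSpace X] (γ : ℝ → X) (a b : ℝ) : Prop :=
  ∀ s ∈ Icc a b, ∀ t ∈ Icc a b, dist (γ s) (γ t) = |s - t|

/-- A geodesic metric space: any two points are joined by a geodesic. -/
def GeodesicSpace (X : Type*) [MetricSpace X] : Prop :=
  ∀ x y : X, ∃ γ : ℝ → X, IsGeodSegment γ 0 (dist x y) ∧ γ 0 = x ∧ γ (dist x y) = y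

/-- δ-hyperbolicity (Rips condition): every point on an edge of a geodesic triangle is
within `δ` of the union of the other two edges. -/
def DeltaHyp (X : Type*) [MetricSpace X] (δ : ℝ) : Prop :=
  ∀ (γ₁ γ₂ γ₃ : ℝ → X) (a₁ b₁ a₂ b₂ a₃ b₃ : ℝ),
    IsGeodSegment γ₁ a₁ b₁ → IsGeodSegment γ₂ a₂ b₂ → IsGeodSegment γ₃ a₃ b₃ →
    a₁ ≤ b₁ → a₂ ≤ b₂ → a₃ ≤ b₃ →
    γ₁ a₁ = γ₃ a₃ → γ₁ b₁ = γ₂ a₂ → γ₂ b₂ = γ₃ b₃ →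
    ∀ s ∈ Icc a₁ b₁, ∃ p : X,
      ((∃ t ∈ Icc a₂ b₂, p = γ₂ t) ∨ (∃ t ∈ Icc a₃ b₃, p = γ₃ t)) ∧ dist (γ₁ s) p ≤ δ

/-- A point of `X̄ = X ∪ ∂X`: an interior point, or a boundary point represented
by a Gromov sequence. -/
def IsXBarPt [MetricSpace X] : X ⊕ (ℕ → X) → Prop
  | Sum.inl _ => True
  | Sum.inr u => IsGromovSeq u

/-- The left end of the curve `γ` (restricted to `I`) is the point `p` of `X̄`:
either `γ` attains the interior point at the minimum of `I`, or `I` is unbounded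
below and `γ` converges at `-∞` to the given boundary point. -/
def LeftEnd [MetricSpace X] (γ : ℝ → X) (I : Set ℝ) : X ⊕ (ℕ → X) → Prop
  | Sum.inl a => ∃ s ∈ I, γ s = a ∧ ∀ t ∈ I, s ≤ t
  | Sum.inr u => ∃ σ : ℕ → ℝ, (∀ n, σ n ∈ I) ∧ Tendsto σ atTop atBot ∧
      GromovEquiv (fun n => γ (σ n)) u

/-- The right end of the curve `γ` (restricted to `I`) is the point `p` of `X̄`. -/
def RightEnd [MetricSpace X] (γ : ℝ → X) (I : Set ℝ) : X ⊕ (ℕ → X) → Prop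
  | Sum.inl a => ∃ s ∈ I, γ s = a ∧ ∀ t ∈ I, t ≤ s
  | Sum.inr u => ∃ σ : ℕ → ℝ, (∀ n, σ n ∈ I) ∧ Tendsto σ atTop atTop ∧
      GromovEquiv (fun n => γ (σ n)) u

/-- `γ` restricted to the interval `I` is a geodesic joining `p` to `q` in `X̄`. -/
def IsGeodJoining [MetricSpace X] (γ : ℝ → X) (I : Set ℝ) (p q : X ⊕ (ℕ → X)) : Prop :=
  I.Nonempty ∧ I.OrdConnected ∧ (∀ s ∈ I, ∀ t ∈ I, dist (γ s) (γ t) = |s - t|) ∧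
    LeftEnd γ I p ∧ RightEnd γ I q

/-- `γ` restricted to the interval `I` is a `(K, C)`-quasi-geodesic joining `p` to `q`. -/
def IsQGeodJoining [MetricSpace X] (K C : ℝ) (γ : ℝ → X) (I : Set ℝ)
    (p q : X ⊕ (ℕ → X)) : Prop :=
  I.Nonempty ∧ I.OrdConnected ∧
    (∀ s ∈ I, ∀ t ∈ I, K⁻¹ * |s - t| - C ≤ dist (γ s) (γ t) ∧
      dist (γ s) (γ t) ≤ K * |s - t| + C) ∧
    LeftEnd γ I p ∧ RightEnd γ I q

/-- `x` is a `(K, C, ρ)`-quasi-centroid of the triple `p₁, p₂, p₃ ∈ X̄`. -/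
def IsQuasiCentroid [MetricSpace X] (K C ρ : ℝ) (x : X) (p₁ p₂ p₃ : X ⊕ (ℕ → X)) : Prop :=
  ∃ (γ₁ γ₂ γ₃ : ℝ → X) (I₁ I₂ I₃ : Set ℝ),
    IsQGeodJoining K C γ₁ I₁ p₁ p₂ ∧ IsQGeodJoining K C γ₂ I₂ p₂ p₃ ∧
      IsQGeodJoining K C γ₃ I₃ p₁ p₃ ∧
      (∃ s ∈ I₁, dist x (γ₁ s) ≤ ρ) ∧ (∃ s ∈ I₂, dist x (γ₂ s) ≤ ρ) ∧
      (∃ s ∈ I₃, dist x (γ₃ s) ≤ ρ)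

/-- `Δ_{(K,C,ρ)}(∂X)`: all `(K,C,ρ)`-quasi-centroids of triples of boundary points. -/
def centroidSetBdry (X : Type*) [MetricSpace X] (K C ρ : ℝ) : Set X :=
  {x | ∃ u₁ u₂ u₃ : ℕ → X, IsGromovSeq u₁ ∧ IsGromovSeq u₂ ∧ IsGromovSeq u₃ ∧
    IsQuasiCentroid K C ρ x (Sum.inr u₁) (Sum.inr u₂) (Sum.inr u₃)}

/-- `E` is `M`-roughly full in `X`. -/
def RoughlyFull [MetricSpace X] (E : Set X) (M : ℝ) : Prop :=
  ∀ x : X, ∃ e ∈ E, dist x e ≤ M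

/-- `(K, C)`-quasi-isometric embedding. -/
def IsQIEmbedding [MetricSpace X] [MetricSpace Y] (K C : ℝ) (f : X → Y) : Prop :=
  1 ≤ K ∧ 0 ≤ C ∧ ∀ x y : X,
    K⁻¹ * dist x y - C ≤ dist (f x) (f y) ∧ dist (f x) (f y) ≤ K * dist x y + C

/-- `(K, C)`-quasi-isometry. -/
def IsQuasiIsometry [MetricSpace X] [MetricSpace Y] (K C : ℝ) (f : X → Y) : Prop :=
  IsQIEmbedding K C f ∧ ∀ y : Y, ∃ x : X, dist y (f x) ≤ C

/-- `X` is boundary rigid: every self quasi-isometry inducing the identity map on the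
Gromov boundary (i.e. sending every Gromov sequence to an equivalent one) has finite
displacement. -/
def BoundaryRigid (X : Type*) [MetricSpace X] : Prop :=
  ∀ (K C : ℝ) (f : X → X), IsQuasiIsometry K C f →
    (∀ u : ℕ → X, IsGromovSeq u → GromovEquiv u (f ∘ u)) →
    ∃ M : ℝ, ∀ x : X, dist x (f x) ≤ M

/-- `o ∈ X̄` is an `L`-pole: every point of `X` lies within `L` of some geodesic
from `o` to some boundary point. -/
def PoleAt [MetricSpace X] (L : ℝ) (o : X ⊕ (ℕ → X)) : Prop :=
  IsXBarPt o ∧ ∀ x : X, ∃ (γ : ℝ → X) (I : Set ℝ) (v : ℕ → X), IsGromovSeq v ∧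
    IsGeodJoining γ I o (Sum.inr v) ∧ ∃ s ∈ I, dist x (γ s) ≤ L

/-- `X` has a pole. -/
def HasPole (X : Type*) [MetricSpace X] : Prop :=
  ∃ (L : ℝ) (o : X ⊕ (ℕ → X)), 0 ≤ L ∧ PoleAt L o

/-- `ρ_{w,ε}` on boundary classes: `e^{-ε (ξ|ζ)_w}` where the Gromov product of two
boundary points is the infimum over representatives of the liminf of Gromov products;
equivalently the sup over representatives of the limsup of `e^{-ε (x_i|y_i)_w}`. -/
noncomputable def visRho [MetricSpace X] (w : X) (ε : ℝ) (u v : ℕ → X) : ℝ :=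
  sSup {t | ∃ u' v' : ℕ → X, GromovEquiv u u' ∧ GromovEquiv v v' ∧
    t = Filter.limsup (fun i => Real.exp (-ε * gp w (u' i) (v' i))) atTop}

/-- The visual metric `d_{w,ε}` on boundary classes, as a chain infimum of `ρ_{w,ε}`. -/
noncomputable def visDist [MetricSpace X] (w : X) (ε : ℝ) (u v : ℕ → X) : ℝ :=
  sInf {s | ∃ (n : ℕ) (c : ℕ → ℕ → X), 1 ≤ n ∧ (∀ i, i ≤ n → IsGromovSeq (c i)) ∧
    GromovEquiv (c 0) u ∧ GromovEquiv (c n) v ∧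
    s = ∑ i ∈ Finset.range n, visRho w ε (c i) (c (i + 1))}

/-- The Gromov boundary of `X` (with any visual metric whose parameters are admissible
for `δ`) is uniformly perfect. -/
def BoundaryUniformlyPerfect (X : Type*) [MetricSpace X] (δ : ℝ) : Prop :=
  ∀ (w : X) (ε : ℝ), 0 < ε → ε < 1 → ε * (5 * δ) < 1 →
    ∃ S : ℝ, 1 ≤ S ∧ ∃ r₀ : ℝ, 0 < r₀ ∧
      ∀ u : ℕ → X, IsGromovSeq u → ∀ r : ℝ, 0 < r → r ≤ r₀ →
        ∃ v : ℕ → X, IsGromovSeq v ∧ r / S < visDist w ε u v ∧ visDist w ε u v ≤ r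

/-- Bi-infinite geodesic. -/
def IsBiInfGeod [MetricSpace X] (γ : ℝ → X) : Prop :=
  ∀ s t : ℝ, dist (γ s) (γ t) = |s - t|

/-- Distance between (the images of) two bi-infinite geodesics. -/
noncomputable def lineDist [MetricSpace X] (γ γ' : ℝ → X) : ℝ :=
  sInf {r | ∃ s t : ℝ, r = dist (γ s) (γ' t)}

/-- First condition in the definition of geodesic richness. -/
def RichCondOne (X : Type*) [MetricSpace X] (r₀ r₁ r₂ : ℝ) : Prop :=
  ∀ p q : X, r₀ ≤ dist p q → ∃ γ : ℝ → X, IsBiInfGeod γ ∧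
    infDist p (range γ) < r₁ ∧ |infDist q (range γ) - dist p q| < r₂

/-- Second condition in the definition of geodesic richness. -/
def RichCondTwo (X : Type*) [MetricSpace X] (r₃ r₄ : ℝ) : Prop :=
  ∀ γ : ℝ → X, IsBiInfGeod γ → ∀ p : X, ∃ γ' : ℝ → X, IsBiInfGeod γ' ∧
    infDist p (range γ') < r₃ ∧ |infDist p (range γ) - lineDist γ' γ| < r₄

/-- Geodesically rich space. -/
def GeodesicallyRich (X : Type*) [MetricSpace X] : Prop :=
  ∃ r₀ r₁ r₂ r₃ r₄ : ℝ, RichCondOne X r₀ r₁ r₂ ∧ RichCondTwo X r₃ r₄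

/-- Every closest-point projection of `x` to the geodesic segment `γ|_{[a,b]}`
lies within `R` of the point `c`. -/
def segProjIn [MetricSpace X] (γ : ℝ → X) (a b : ℝ) (x c : X) (R : ℝ) : Prop :=
  ∀ s ∈ Icc a b, (∀ t ∈ Icc a b, dist x (γ s) ≤ dist x (γ t)) → dist (γ s) c ≤ R

/-- Projection to a geodesic `[y,z]` (parametrized by `γ` on `I`): the set of closest
points for interior `x`, and the set of `(1,0,3δ)`-quasi-centroids of `{x,y,z}` for
boundary `x`. -/
def projSet [MetricSpace X] (δ : ℝ) (γ : ℝ → X) (I : Set ℝ) (y z : X ⊕ (ℕ → X)) :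
    X ⊕ (ℕ → X) → Set X
  | Sum.inl a => {p | ∃ s ∈ I, p = γ s ∧ ∀ t ∈ I, dist a (γ s) ≤ dist a (γ t)}
  | Sum.inr u => {p | IsQuasiCentroid 1 0 (3 * δ) p (Sum.inr u) y z}

/-! ### Auxiliary development -/

section Aux

variable {X : Type*} [MetricSpace X]

lemma gp_nonneg (w x y : X) : 0 ≤ gp w x y := by
  have h1 := dist_triangle x w y
  have h2 : dist w y = dist y w := dist_comm w y
  simp only [gp]; linarith

lemma gp_le_left (w x y : X) : gp w x y ≤ dist x w := by
  have h1 := dist_triangle y x w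
  have h2 : dist y x = dist x y := dist_comm y x
  simp only [gp]; linarith

lemma gp_comm (w x y : X) : gp w x y = gp w y x := by
  have h2 : dist y x = dist x y := dist_comm y x
  simp only [gp]; linarith

lemma gp_le_right (w x y : X) : gp w x y ≤ dist y w := by
  rw [gp_comm]; exact gp_le_left w y x

/-- Base-change estimate for Gromov products. -/
lemma gp_base_change (w w' x y : X) : gp w x y ≥ gp w' x y - dist w w' := by
  simp only [gp]
  have h3 : dist x w' ≤ dist x w + dist w w' := dist_triangle x w w'
  have h4 : dist y w' ≤ dist y w + dist w w' := dist_triangle y w w'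
  linarith

/-- Moving one endpoint changes the Gromov product by at most the displacement. -/
lemma gp_move_left (w x x' y : X) : gp w x' y ≥ gp w x y - dist x x' := by
  simp only [gp]
  have h1 : dist x w ≤ dist x x' + dist x' w := dist_triangle x x' w
  have h2 : dist x' y ≤ dist x' x + dist x y := dist_triangle x' x y
  have h3 : dist x' x = dist x x' := dist_comm x' x
  linarith

lemma gp_move_right (w x y y' : X) : gp w x y' ≥ gp w x y - dist y y' := by
  rw [gp_comm, gp_comm w x y]; exact gp_move_left w y y' x

/-- `gp w x y + gp x w y = dist x w`. -/
lemma gp_add_gp (w x y : X) : gp w x y + gp x w y = dist x w := by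
  simp only [gp]
  have h1 : dist w x = dist x w := dist_comm w x
  have h2 : dist y x = dist x y := dist_comm y x
  have h3 : dist w y = dist y w := dist_comm w y
  linarith

/-- A bundled geodesic segment from `x` to `y`, parametrized on `[0, ℓ]`. -/
def GSeg (c : ℝ → X) (ℓ : ℝ) (x y : X) : Prop :=
  0 ≤ ℓ ∧ IsGeodSegment c 0 ℓ ∧ c 0 = x ∧ c ℓ = y

namespace GSeg

variable {c : ℝ → X} {ℓ : ℝ} {x y : X}

lemma len (h : GSeg c ℓ x y) : ℓ = dist x y := by
  obtain ⟨h0, hg, hx, hy⟩ := h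
  have := hg 0 ⟨le_refl _, h0⟩ ℓ ⟨h0, le_refl _⟩
  rw [hx, hy] at this
  rw [this, abs_of_nonpos (by linarith)]; ring

lemma dist_left (h : GSeg c ℓ x y) {r : ℝ} (hr : r ∈ Icc 0 ℓ) :
    dist x (c r) = r := by
  obtain ⟨h0, hg, hx, hy⟩ := h
  have := hg 0 ⟨le_refl _, h0⟩ r hr
  rw [hx] at this
  rw [this, abs_of_nonpos (by linarith [hr.1])]; ring

lemma dist_right (h : GSeg c ℓ x y) {r : ℝ} (hr : r ∈ Icc 0 ℓ) :
    dist (c r) y = ℓ - r := by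
  obtain ⟨h0, hg, hx, hy⟩ := h
  have := hg r hr ℓ ⟨h0, le_refl _⟩
  rw [hy] at this
  rw [this, abs_of_nonpos (by linarith [hr.2])]; ring

end GSeg

lemma GeodesicSpace.gseg (geo : GeodesicSpace X) (x y : X) :
    ∃ c : ℝ → X, GSeg c (dist x y) x y := by
  obtain ⟨c, hg, hx, hy⟩ := geo x y
  exact ⟨c, dist_nonneg, hg, hx, hy⟩

/-- B1: the Gromov product bounds the distance to any point on a geodesic. -/
lemma gp_le_dist_geod {c : ℝ → X} {ℓ : ℝ} {x y : X} (h : GSeg c ℓ x y)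
    (z : X) {r : ℝ} (hr : r ∈ Icc 0 ℓ) : gp z x y ≤ dist z (c r) := by
  have h1 : dist x (c r) = r := h.dist_left hr
  have h2 : dist (c r) y = ℓ - r := h.dist_right hr
  have hl : ℓ = dist x y := h.len
  have t1 : dist x z ≤ dist x (c r) + dist (c r) z := dist_triangle _ _ _
  have t2 : dist y z ≤ dist y (c r) + dist (c r) z := dist_triangle _ _ _
  have e1 : dist y (c r) = ℓ - r := by rw [dist_comm]; exact h2
  have e2 : dist (c r) z = dist z (c r) := dist_comm _ _
  simp only [gp]
  linarith

/-- Rips condition, bundled form. -/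
lemma rips {δ : ℝ} (hyp : DeltaHyp X δ) {x y z : X} {c₁ c₂ c₃ : ℝ → X} {ℓ₁ ℓ₂ ℓ₃ : ℝ}
    (h₁ : GSeg c₁ ℓ₁ x y) (h₂ : GSeg c₂ ℓ₂ y z) (h₃ : GSeg c₃ ℓ₃ x z)
    {r : ℝ} (hr : r ∈ Icc 0 ℓ₁) :
    ∃ u : X, ((∃ t ∈ Icc 0 ℓ₂, u = c₂ t) ∨ (∃ t ∈ Icc 0 ℓ₃, u = c₃ t)) ∧
      dist (c₁ r) u ≤ δ := by
  exact hyp c₁ c₂ c₃ 0 ℓ₁ 0 ℓ₂ 0 ℓ₃ h₁.2.1 h₂.2.1 h₃.2.1 h₁.1 h₂.1 h₃.1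
    (by rw [h₁.2.2.1, h₃.2.2.1]) (by rw [h₁.2.2.2, h₂.2.2.1])
    (by rw [h₂.2.2.2, h₃.2.2.2]) r hr

/-- B2: some point of a given geodesic `[x,y]` is within `gp z x y + 2δ` of `z`. -/
lemma exists_dist_le_gp_add {δ : ℝ} (geo : GeodesicSpace X) (hyp : DeltaHyp X δ)
    {x y : X} {c : ℝ → X} {ℓ : ℝ} (h : GSeg c ℓ x y) (z : X) :
    ∃ r ∈ Icc 0 ℓ, dist z (c r) ≤ gp z x y + 2 * δ := by
  obtain ⟨c₂, h₂⟩ := geo.gseg y z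
  obtain ⟨c₃, h₃⟩ := geo.gseg x z
  have hr : gp x y z ∈ Icc 0 ℓ := by
    constructor
    · exact gp_nonneg x y z
    · rw [h.len]; exact (gp_le_left x y z).trans (le_of_eq (dist_comm y x))
  set r := gp x y z with hrdef
  refine ⟨r, hr, ?_⟩
  obtain ⟨u, hu, hdu⟩ := rips hyp h h₂ h₃ hr
  have hrval : r = (dist y x + dist z x - dist y z) / 2 := by simp only [hrdef, gp]
  have c1 : dist y x = dist x y := dist_comm y x
  have c2 : dist z x = dist x z := dist_comm z x
  have c3 : dist z y = dist y z := dist_comm z y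
  have hgoal : gp z x y = (dist x z + dist y z - dist x y) / 2 := by simp only [gp]
  rcases hu with ⟨t, ht, rfl⟩ | ⟨t, ht, rfl⟩
  · -- u on [y,z]
    have A : dist y (c₂ t) = t := h₂.dist_left ht
    have B : dist (c₂ t) z = dist y z - t := by
      have := h₂.dist_right ht; rw [h₂.len] at this; exact this
    have C : dist y (c r) = ℓ - r := by rw [dist_comm]; exact h.dist_right hr
    have D : dist y (c r) ≤ dist y (c₂ t) + dist (c₂ t) (c r) := dist_triangle _ _ _
    have D' : dist (c₂ t) (c r) = dist (c r) (c₂ t) := dist_comm _ _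
    have E : dist z (c r) ≤ dist z (c₂ t) + dist (c₂ t) (c r) := dist_triangle _ _ _
    have E' : dist z (c₂ t) = dist y z - t := by rw [dist_comm]; exact B
    have hl : ℓ = dist x y := h.len
    rw [hgoal]
    linarith [hrval]
  · -- u on [x,z]
    have A : dist x (c₃ t) = t := h₃.dist_left ht
    have B : dist (c₃ t) z = dist x z - t := by
      have := h₃.dist_right ht; rw [h₃.len] at this; exact this
    have C : dist x (c r) = r := h.dist_left hr
    have D : dist x (c r) ≤ dist x (c₃ t) + dist (c₃ t) (c r) := dist_triangle _ _ _
    have D' : dist (c₃ t) (c r) = dist (c r) (c₃ t) := dist_comm _ _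
    have E : dist z (c r) ≤ dist z (c₃ t) + dist (c₃ t) (c r) := dist_triangle _ _ _
    have E' : dist z (c₃ t) = dist x z - t := by rw [dist_comm]; exact B
    rw [hgoal]
    linarith [hrval]

/-- The four-point (hyperbolic) inequality, with constant `3δ`. -/
lemma four_point {δ : ℝ} (geo : GeodesicSpace X) (hyp : DeltaHyp X δ) (z x y t : X) :
    min (gp z x t) (gp z t y) ≤ gp z x y + 3 * δ := by
  obtain ⟨c₁, h₁⟩ := geo.gseg x y
  obtain ⟨r, hr, hB2⟩ := exists_dist_le_gp_add geo hyp h₁ z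
  obtain ⟨c₂, h₂⟩ := geo.gseg y t
  obtain ⟨c₃, h₃⟩ := geo.gseg x t
  obtain ⟨u, hu, hdu⟩ := rips hyp h₁ h₂ h₃ hr
  rcases hu with ⟨s, hs, rfl⟩ | ⟨s, hs, rfl⟩
  · have hb1 := gp_le_dist_geod h₂ z hs
    have hchain : dist z (c₂ s) ≤ dist z (c₁ r) + δ := by
      have := dist_triangle z (c₁ r) (c₂ s); linarith
    have : gp z y t ≤ gp z x y + 3 * δ := by linarith
    rw [gp_comm z y t] at this
    exact le_trans (min_le_right _ _) this
  · have hb1 := gp_le_dist_geod h₃ z hs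
    have hchain : dist z (c₃ s) ≤ dist z (c₁ r) + δ := by
      have := dist_triangle z (c₁ r) (c₃ s); linarith
    have : gp z x t ≤ gp z x y + 3 * δ := by linarith
    exact le_trans (min_le_left _ _) this

end Aux
section Line

variable {X : Type*} [MetricSpace X] {δ : ℝ} {γ : ℝ → X}

/-- A globally geodesic line. -/
def IsLine (γ : ℝ → X) : Prop := ∀ s t : ℝ, dist (γ s) (γ t) = |s - t|

namespace IsLine

lemma lipschitz (hγ : IsLine γ) : LipschitzWith 1 γ := by
  refine LipschitzWith.of_dist_le_mul fun s t => ?_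
  rw [hγ s t, Real.dist_eq]
  simp

lemma continuous (hγ : IsLine γ) : Continuous γ := hγ.lipschitz.continuous

lemma gsegLR (hγ : IsLine γ) {s t : ℝ} (hst : s ≤ t) :
    GSeg (fun r => γ (s + r)) (t - s) (γ s) (γ t) := by
  refine ⟨by linarith, fun r _ r' _ => ?_, by norm_num, by norm_num⟩
  rw [hγ]
  congr 1
  ring

lemma gsegRL (hγ : IsLine γ) {s t : ℝ} (hst : s ≤ t) :
    GSeg (fun r => γ (t - r)) (t - s) (γ t) (γ s) := by
  refine ⟨by linarith, fun r _ r' _ => ?_, by norm_num, by norm_num⟩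
  rw [hγ]
  rw [show t - r - (t - r') = -(r - r') by ring, abs_neg]

lemma neg (hγ : IsLine γ) : IsLine (fun t => γ (-t)) := by
  intro s t
  rw [hγ]
  rw [show -s - -t = -(s - t) by ring, abs_neg]

/-- Existence of a closest-point projection to a geodesic line. -/
lemma exists_min (hγ : IsLine γ) (x : X) : ∃ t₀ : ℝ, ∀ t, dist x (γ t₀) ≤ dist x (γ t) := by
  set g : ℝ → ℝ := fun t => dist x (γ t) with hg
  have hcont : Continuous g := (continuous_const.dist hγ.continuous)
  set R : ℝ := 2 * g 0 + 1 with hR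
  have hcpt : IsCompact (Icc (-R) R) := isCompact_Icc
  have h0mem : (0:ℝ) ∈ Icc (-R) R := by
    constructor
    · simp only [hR]; have := dist_nonneg (x := x) (y := γ 0); simp only [hg]; linarith
    · simp only [hR]; have := dist_nonneg (x := x) (y := γ 0); simp only [hg]; linarith
  obtain ⟨t₀, ht₀mem, ht₀⟩ := hcpt.exists_isMinOn ⟨0, h0mem⟩ hcont.continuousOn
  refine ⟨t₀, fun t => ?_⟩
  by_cases ht : t ∈ Icc (-R) R
  · exact ht₀ ht
  · have h0 : g t₀ ≤ g 0 := ht₀ h0mem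
    have habs : R < |t| := by
      simp only [Icc, mem_setOf_eq, not_and_or, not_le] at ht
      rcases ht with h | h
      · rw [abs_of_neg (by nlinarith [dist_nonneg (x := x) (y := γ 0)] : t < 0)]; linarith
      · rw [abs_of_pos (by nlinarith [dist_nonneg (x := x) (y := γ 0)] : 0 < t)]; exact h
    have hax : |t| - g 0 ≤ g t := by
      have h1 : dist (γ t) (γ 0) ≤ dist (γ t) x + dist x (γ 0) := dist_triangle _ _ _
      have h2 : dist (γ t) (γ 0) = |t| := by rw [hγ t 0]; simp
      have h3 : dist (γ t) x = dist x (γ t) := dist_comm _ _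
      simp only [hg]; linarith
    calc g t₀ ≤ g 0 := h0
    _ ≤ |t| - g 0 - 1 := by simp only [hR] at habs; linarith
    _ ≤ g t := by linarith

end IsLine

end Line
section Proj

variable {X : Type*} [MetricSpace X] {δ : ℝ} {γ : ℝ → X}

/-- F0, one-sided version: the projection "unfolds" distances along the line. -/
private lemma F0_aux (geo : GeodesicSpace X) (hyp : DeltaHyp X δ) (hδ : 0 ≤ δ)
    (hγ : IsLine γ) {x : X} {t₀ : ℝ}
    (hmin : ∀ t, dist x (γ t₀) ≤ dist x (γ t)) {u : ℝ} (hu : t₀ ≤ u) :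
    dist x (γ t₀) + (u - t₀) - 4 * δ ≤ dist x (γ u) := by
  set dx := dist x (γ t₀) with hdx
  rw [show dist x (γ t₀) + (u - t₀) - 4*δ = dx + (u - t₀) - 4*δ from rfl]
  refine le_of_forall_pos_le_add fun η hη => ?_
  by_cases hsmall : u - t₀ ≤ 2 * δ + η
  · have := hmin u
    linarith
  -- main case
  have h₁ := hγ.gsegLR hu
  obtain ⟨c₂, h₂⟩ := geo.gseg (γ u) x
  obtain ⟨c₃, h₃⟩ := geo.gseg (γ t₀) x
  set μ := 2 * δ + η with hμ
  have hμmem : μ ∈ Icc (0:ℝ) (u - t₀) := ⟨by positivity, by linarith⟩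
  obtain ⟨v, hv, hdv⟩ := rips hyp h₁ h₂ h₃ hμmem
  have hwt₀ : dist (γ t₀) (γ (t₀ + μ)) = μ := by
    rw [hγ]; rw [show t₀ - (t₀ + μ) = -μ by ring, abs_neg, abs_of_nonneg (by positivity)]
  rcases hv with ⟨r, hr, rfl⟩ | ⟨r, hr, rfl⟩
  · -- v on [γ u, x]
    have A : dist (γ u) (c₂ r) = r := h₂.dist_left hr
    have B : dist (c₂ r) x = dist (γ u) x - r := by
      have := h₂.dist_right hr; rwa [h₂.len] at this
    have C : dist (γ u) (γ (t₀ + μ)) = u - t₀ - μ := by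
      rw [hγ, abs_of_nonneg (by linarith)]; ring
    have D : r ≥ u - t₀ - μ - δ := by
      have h1 := dist_triangle (γ u) (c₂ r) (γ (t₀ + μ))
      have hc : dist (c₂ r) (γ (t₀ + μ)) ≤ δ := by rw [dist_comm]; exact hdv
      linarith
    have E : dist (c₂ r) x ≥ dx - δ := by
      have h5 := hmin (t₀ + μ)
      have h1 := dist_triangle x (c₂ r) (γ (t₀ + μ))
      have hc : dist (c₂ r) (γ (t₀ + μ)) ≤ δ := by rw [dist_comm]; exact hdv
      have hx2 : dist (c₂ r) x = dist x (c₂ r) := dist_comm _ _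
      linarith
    have hfin : dist (γ u) x ≥ dx + (u - t₀) - 2*δ - μ := by
      have : dist (γ u) x = r + dist (c₂ r) x := by rw [B]; ring
      linarith
    rw [dist_comm x (γ u)]
    simp only [hμ] at hfin
    linarith
  · -- v on [γ t₀, x] : contradiction
    exfalso
    have A : dist (γ t₀) (c₃ r) = r := h₃.dist_left hr
    have B : dist (c₃ r) x = dist (γ t₀) x - r := by
      have := h₃.dist_right hr; rwa [h₃.len] at this
    have hrδ : r ≤ δ := by
      have h5 := hmin (t₀ + μ)
      have h6 := dist_triangle x (c₃ r) (γ (t₀ + μ))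
      have h7 : dist x (c₃ r) = dist (γ t₀) x - r := by rw [dist_comm]; exact B
      have h8 : dist (c₃ r) (γ (t₀ + μ)) ≤ δ := by
        rw [dist_comm]; exact hdv
      have h9 : dist (γ t₀) x = dx := dist_comm x (γ t₀) ▸ rfl
      rw [h7, h9] at h6
      linarith
    have h10 := dist_triangle (γ t₀) (c₃ r) (γ (t₀ + μ))
    have h11 : dist (c₃ r) (γ (t₀ + μ)) ≤ δ := by rw [dist_comm]; exact hdv
    rw [hwt₀] at h10
    simp only [hμ] at h10
    linarith

/-- F0: distance to line points grows linearly away from the projection. -/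
lemma F0 (geo : GeodesicSpace X) (hyp : DeltaHyp X δ) (hδ : 0 ≤ δ)
    (hγ : IsLine γ) {x : X} {t₀ : ℝ}
    (hmin : ∀ t, dist x (γ t₀) ≤ dist x (γ t)) (u : ℝ) :
    dist x (γ t₀) + |u - t₀| - 4 * δ ≤ dist x (γ u) := by
  rcases le_total t₀ u with h | h
  · rw [abs_of_nonneg (by linarith)]
    exact F0_aux geo hyp hδ hγ hmin h
  · rw [abs_of_nonpos (by linarith)]
    have hneg := hγ.neg
    have hmin' : ∀ t, dist x ((fun s => γ (-s)) (-t₀)) ≤ dist x ((fun s => γ (-s)) t) := by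
      intro t; simp only [neg_neg]; exact hmin (-t)
    have := F0_aux geo hyp hδ hneg hmin' (u := -u) (by linarith)
    simp only [neg_neg] at this
    linarith

/-- F1: closest-point projection to a line is coarsely Lipschitz. -/
lemma F1 (geo : GeodesicSpace X) (hyp : DeltaHyp X δ) (hδ : 0 ≤ δ)
    (hγ : IsLine γ) {x y : X} {tx ty : ℝ}
    (hminx : ∀ t, dist x (γ tx) ≤ dist x (γ t))
    (hminy : ∀ t, dist y (γ ty) ≤ dist y (γ t)) :
    |tx - ty| ≤ dist x y + 4 * δ := by
  have h1 := F0 geo hyp hδ hγ hminx ty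
  have h2 := F0 geo hyp hδ hγ hminy tx
  have h3 : dist x (γ ty) ≤ dist x y + dist y (γ ty) := dist_triangle _ _ _
  have h4 : dist y (γ tx) ≤ dist y x + dist x (γ tx) := dist_triangle _ _ _
  have h5 : dist y x = dist x y := dist_comm _ _
  have h6 : |ty - tx| = |tx - ty| := abs_sub_comm _ _
  rw [h6] at h1
  linarith

/-- F0': two points projecting far apart on the line see the line like a tree. -/
lemma F0' (geo : GeodesicSpace X) (hyp : DeltaHyp X δ) (hδ : 0 ≤ δ)
    (hγ : IsLine γ) {x y : X} {tx ty : ℝ}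
    (hminx : ∀ t, dist x (γ tx) ≤ dist x (γ t))
    (hminy : ∀ t, dist y (γ ty) ≤ dist y (γ t))
    (hgap : 13 * δ < |tx - ty|) :
    dist x (γ tx) + |tx - ty| + dist y (γ ty) - 16 * δ ≤ dist x y := by
  set p := γ tx
  set q := γ ty
  set dx := dist x p with hdxd
  set dy := dist y q with hdyd
  have hΔ : dist q p = |tx - ty| := by
    rw [hγ ty tx, abs_sub_comm]
  -- gp p x q ≤ 2δ
  have hF0x : dx + |tx - ty| - 4*δ ≤ dist x q := by
    have := F0 geo hyp hδ hγ hminx ty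
    rwa [abs_sub_comm ty tx] at this
  have hgpp : gp p x q ≤ 2 * δ := by
    simp only [gp]
    have h1 : dist x p = dx := rfl
    rw [h1, hΔ]
    linarith
  obtain ⟨c, hc⟩ := geo.gseg x q
  obtain ⟨r, hr, hB2⟩ := exists_dist_le_gp_add geo hyp hc p
  have hup : dist p (c r) ≤ 4 * δ := by linarith
  obtain ⟨c₂, h₂⟩ := geo.gseg q y
  obtain ⟨c₃, h₃⟩ := geo.gseg x y
  obtain ⟨v, hv, hdv⟩ := rips hyp hc h₂ h₃ hr
  rcases hv with ⟨s, hs, rfl⟩ | ⟨s, hs, rfl⟩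
  · -- v on [q, y] : contradiction with the gap
    exfalso
    have A : dist q (c₂ s) = s := h₂.dist_left hs
    have B : dist (c₂ s) y = dist q y - s := by
      have := h₂.dist_right hs; rwa [h₂.len] at this
    have hqy : dist q y = dy := dist_comm y q ▸ rfl
    -- ty is a minimizer for c₂ s
    have hminv : ∀ t, dist (c₂ s) q ≤ dist (c₂ s) (γ t) := by
      intro t
      have h1 : dist y (γ t) ≤ dist y (c₂ s) + dist (c₂ s) (γ t) := dist_triangle _ _ _
      have h2 : dist y (c₂ s) = dy - s := by rw [dist_comm]; rw [B, hqy]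
      have h3 := hminy t
      have h4 : dist (c₂ s) q = s := dist_comm q (c₂ s) ▸ A
      rw [h4]
      linarith
    have hF0v := F0 geo hyp hδ hγ (x := c₂ s) (t₀ := ty) hminv tx
    have h5 : dist (c₂ s) p ≤ 5 * δ := by
      have h6 := dist_triangle (c₂ s) (c r) p
      have h7 : dist (c₂ s) (c r) = dist (c r) (c₂ s) := dist_comm _ _
      have h8 : dist (c r) p = dist p (c r) := dist_comm _ _
      linarith
    have h9 : dist (c₂ s) (γ tx) = dist (c₂ s) p := rfl
    have h9' : dist (c₂ s) (γ ty) = dist (c₂ s) q := rfl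
    have h9'' : |tx - ty| = |ty - tx| := abs_sub_comm _ _
    have h10 : (0:ℝ) ≤ dist (c₂ s) q := dist_nonneg
    linarith
  · -- v on [x, y] : main estimate
    have A : dist x (c₃ s) = s := h₃.dist_left hs
    have B : dist (c₃ s) y = dist x y - s := by
      have := h₃.dist_right hs; rwa [h₃.len] at this
    have hs1 : s ≥ dx - 5 * δ := by
      have h1 := dist_triangle x (c₃ s) (c r)
      have h2 := dist_triangle x p (c r)
      have h2' : dist x p ≤ dist x (c r) + dist (c r) p := dist_triangle _ _ _
      have h3 : dist (c r) p = dist p (c r) := dist_comm _ _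
      have h4 : dist (c₃ s) (c r) = dist (c r) (c₃ s) := dist_comm _ _
      rw [A] at h1
      linarith
    have hF0y : dy + |tx - ty| - 4*δ ≤ dist y p := by
      have := F0 geo hyp hδ hγ hminy tx
      exact this
    have hs2 : dist (c₃ s) y ≥ dy + |tx - ty| - 9 * δ := by
      have h1 := dist_triangle y p (c₃ s)
      have h2 := dist_triangle p (c r) (c₃ s)
      have h3 : dist (c r) (c₃ s) ≤ δ := hdv
      have h4 : dist y (c₃ s) = dist (c₃ s) y := dist_comm _ _
      have h5 : dist p (c₃ s) = dist (c₃ s) p := dist_comm _ _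
      have h6 : dist y p ≤ dist y (c₃ s) + dist (c₃ s) p := dist_triangle _ _ _
      linarith
    have : dist x y = s + dist (c₃ s) y := by rw [B]; ring
    linarith

end Proj
section Ulim

/-- A fixed nonprincipal ultrafilter extending `atTop` on `ℕ`. -/
noncomputable def Unf : Ultrafilter ℕ := Ultrafilter.of atTop

lemma atTop_mem_Unf {s : Set ℕ} (hs : s ∈ (atTop : Filter ℕ)) : s ∈ Unf :=
  Ultrafilter.of_le atTop hs

variable {X : Type*} [MetricSpace X]

lemma exists_ulim [ProperSpace X] (f : ℕ → X) (x₀ : X) (R : ℝ)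
    (hf : ∀ n, f n ∈ closedBall x₀ R) :
    ∃ p, Tendsto f (Unf : Filter ℕ) (nhds p) := by
  obtain ⟨p, -, hple⟩ := (isCompact_closedBall x₀ R).ultrafilter_le_nhds (Unf.map f) (by
    rw [Filter.le_principal_iff]
    refine Filter.mem_map.2 ?_
    have : f ⁻¹' closedBall x₀ R = univ := by
      ext n; simp [hf n]
    rw [this]
    exact Filter.univ_mem)
  refine ⟨p, ?_⟩
  have := hple
  rw [Ultrafilter.coe_map] at this
  exact this

lemma ulim_dist_le {f g : ℕ → X} {p q : X} (hf : Tendsto f (Unf : Filter ℕ) (nhds p))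
    (hg : Tendsto g (Unf : Filter ℕ) (nhds q)) {c : ℝ}
    (h : {n | dist (f n) (g n) ≤ c} ∈ Unf) : dist p q ≤ c := by
  have hd : Tendsto (fun n => dist (f n) (g n)) (Unf : Filter ℕ) (nhds (dist p q)) :=
    hf.dist hg
  exact le_of_tendsto hd h

lemma ulim_dist_eq {f g : ℕ → X} {p q : X} (hf : Tendsto f (Unf : Filter ℕ) (nhds p))
    (hg : Tendsto g (Unf : Filter ℕ) (nhds q)) {c : ℝ}
    (h : {n | dist (f n) (g n) = c} ∈ Unf) : dist p q = c := by
  have hd : Tendsto (fun n => dist (f n) (g n)) (Unf : Filter ℕ) (nhds (dist p q)) :=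
    hf.dist hg
  have hc : Tendsto (fun n => dist (f n) (g n)) (Unf : Filter ℕ) (nhds c) := by
    refine Tendsto.congr' ?_ tendsto_const_nhds
    exact Filter.eventually_of_mem h fun n hn => hn.symm
  exact tendsto_nhds_unique hd hc

/-- Ultrafilter limit of a bounded real sequence. -/
lemma exists_ulim_real (f : ℕ → ℝ) {A B : ℝ} (hf : ∀ n, f n ∈ Icc A B) :
    ∃ p ∈ Icc A B, Tendsto f (Unf : Filter ℕ) (nhds p) := by
  obtain ⟨p, hp⟩ := exists_ulim f ((A+B)/2) ((B-A)/2) (fun n => by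
    have := hf n
    simp only [closedBall, mem_setOf_eq, Real.dist_eq]
    rw [abs_le]
    constructor <;> [linarith [this.1]; linarith [this.2]])
  refine ⟨p, ⟨?_, ?_⟩, hp⟩
  · exact ge_of_tendsto hp (Filter.Eventually.of_forall fun n => (hf n).1)
  · exact le_of_tendsto hp (Filter.Eventually.of_forall fun n => (hf n).2)

/-- The geodesic ray from `base` asymptotic to the positive end of the line `ρ`,
obtained as an ultrafilter limit of geodesic segments `[base, ρ n]`. -/
lemma exists_ray [ProperSpace X] (geo : GeodesicSpace X) {ρ : ℝ → X} (hρ : IsLine ρ)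
    (base : X) :
    ∃ (Ra : ℝ → X) (cs : ℕ → ℝ → X),
      (∀ n : ℕ, GSeg (cs n) (dist base (ρ n)) base (ρ n)) ∧
      Ra 0 = base ∧
      (∀ r r' : ℝ, 0 ≤ r → 0 ≤ r' → dist (Ra r) (Ra r') = |r - r'|) ∧
      (∀ r : ℝ, 0 ≤ r → ∀ ε : ℝ, 0 < ε →
        {n : ℕ | r ≤ dist base (ρ n) ∧ dist (Ra r) (cs n r) ≤ ε} ∈ Unf) := by
  have hcs : ∀ n : ℕ, ∃ c : ℝ → X, GSeg c (dist base (ρ n)) base (ρ n) := fun n =>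
    geo.gseg base (ρ n)
  choose cs hcsp using hcs
  set d : ℕ → ℝ := fun n => dist base (ρ n) with hd
  have hdlarge : ∀ r : ℝ, {n : ℕ | r ≤ d n} ∈ (atTop : Filter ℕ) := by
    intro r
    have : ∀ n : ℕ, (n : ℝ) - dist base (ρ 0) ≤ d n := by
      intro n
      have h1 : dist (ρ n) (ρ 0) ≤ dist (ρ n) base + dist base (ρ 0) := dist_triangle _ _ _
      have h2 : dist (ρ n) (ρ 0) = (n : ℝ) := by
        rw [hρ]; simp
      have h3 : dist (ρ n) base = d n := dist_comm base (ρ n) ▸ rfl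
      simp only [hd]; linarith
    obtain ⟨N, hN⟩ := exists_nat_ge (r + dist base (ρ 0))
    refine Filter.mem_atTop_sets.2 ⟨N, fun n hn => ?_⟩
    have : (N : ℝ) ≤ (n : ℝ) := by exact_mod_cast hn
    have := this
    calc r ≤ (N:ℝ) - dist base (ρ 0) := by linarith [hN]
    _ ≤ (n:ℝ) - dist base (ρ 0) := by linarith
    _ ≤ d n := by exact_mod_cast ‹∀ n : ℕ, (n : ℝ) - dist base (ρ 0) ≤ d n› n
  set f : ℝ → ℕ → X := fun r n => cs n (min (max r 0) (d n)) with hf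
  have hfmem : ∀ r n, f r n ∈ closedBall base (max r 0) := by
    intro r n
    have hdn : 0 ≤ d n := dist_nonneg
    have hmm : min (max r 0) (d n) ∈ Icc 0 (d n) :=
      ⟨le_min (le_max_right r 0) hdn, min_le_right _ _⟩
    have hdl := (hcsp n).dist_left hmm
    simp only [mem_closedBall, hf]
    rw [dist_comm, hdl]
    exact min_le_left _ _
  have hex : ∀ r : ℝ, ∃ p : X, Tendsto (fun n => f r n) (Unf : Filter ℕ) (nhds p) :=
    fun r => exists_ulim _ base (max r 0) (hfmem r)
  choose Ra hRa using hex
  have hbase : Ra 0 = base := by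
    have h0 : ∀ n, f 0 n = base := by
      intro n
      have hdn : 0 ≤ d n := dist_nonneg
      simp only [hf, max_self, min_eq_left hdn]
      · have := (hcsp n).2.2.1
        simpa using this
    have : Tendsto (fun n => f 0 n) (Unf : Filter ℕ) (nhds base) := by
      refine Tendsto.congr' ?_ tendsto_const_nhds
      exact Filter.Eventually.of_forall fun n => (h0 n).symm
    exact tendsto_nhds_unique (hRa 0) this
  refine ⟨Ra, cs, hcsp, hbase, ?_, ?_⟩
  · intro r r' hr hr'
    refine ulim_dist_eq (hRa r) (hRa r') ?_
    refine atTop_mem_Unf (Filter.mem_of_superset (hdlarge (max r r')) fun n hn => ?_)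
    have hrn : min (max r 0) (d n) = r := by
      rw [max_eq_left hr, min_eq_left (le_trans (le_max_left _ _) hn)]
    have hrn' : min (max r' 0) (d n) = r' := by
      rw [max_eq_left hr', min_eq_left (le_trans (le_max_right _ _) hn)]
    simp only [hf, hrn, hrn', mem_setOf_eq]
    have h1 : r ∈ Icc 0 (d n) := ⟨hr, le_trans (le_max_left _ _) hn⟩
    have h2 : r' ∈ Icc 0 (d n) := ⟨hr', le_trans (le_max_right _ _) hn⟩
    exact (hcsp n).2.1 r h1 r' h2
  · intro r hr ε hε
    have hconv : {n | dist (Ra r) (f r n) ≤ ε} ∈ Unf := by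
      have : Tendsto (fun n => dist (Ra r) (f r n)) (Unf : Filter ℕ) (nhds 0) := by
        have := (tendsto_const_nhds (x := Ra r) (f := (Unf : Filter ℕ))).dist (hRa r)
        simpa using this
      have hev : ∀ᶠ n in (Unf : Filter ℕ), dist (Ra r) (f r n) < ε :=
        (this.eventually (eventually_lt_nhds hε))
      exact hev.mono fun n hn => le_of_lt hn
    refine Filter.mem_of_superset
      (Filter.inter_mem (atTop_mem_Unf (hdlarge r)) hconv) fun n hn => ?_
    obtain ⟨h1, h2⟩ := hn
    refine ⟨h1, ?_⟩
    have heq : min (max r 0) (d n) = r := by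
      rw [max_eq_left hr, min_eq_left h1]
    have h2' : dist (Ra r) (cs n (min (max r 0) (d n))) ≤ ε := h2
    rwa [heq] at h2' 

end Ulim
section RayEnd

variable {X : Type*} [MetricSpace X] {δ : ℝ} {ρ : ℝ → X}

lemma gp_on_line_nonneg (hρ : IsLine ρ) (z : X) {r r' : ℝ} (hr : 0 ≤ r) (hr' : 0 ≤ r') :
    min r r' - dist z (ρ 0) ≤ gp z (ρ r) (ρ r') := by
  have h1 : dist (ρ r) (ρ 0) ≤ dist (ρ r) z + dist z (ρ 0) := dist_triangle _ _ _
  have h2 : dist (ρ r') (ρ 0) ≤ dist (ρ r') z + dist z (ρ 0) := dist_triangle _ _ _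
  have e1 : dist (ρ r) (ρ 0) = r := by rw [hρ]; simp [abs_of_nonneg hr]
  have e2 : dist (ρ r') (ρ 0) = r' := by rw [hρ]; simp [abs_of_nonneg hr']
  have e3 : dist (ρ r) (ρ r') = |r - r'| := hρ r r'
  simp only [gp]
  rcases abs_cases (r - r') with ⟨h, _⟩ | ⟨h, _⟩ <;>
    [rw [e3, h]; rw [e3, h]] <;>
    rcases min_cases r r' with ⟨hm, _⟩ | ⟨hm, _⟩ <;> rw [hm] <;> linarith

lemma gp_on_line_nonpos (hρ : IsLine ρ) (z : X) {r r' : ℝ} (hr : r ≤ 0) (hr' : r' ≤ 0) :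
    min (-r) (-r') - dist z (ρ 0) ≤ gp z (ρ r) (ρ r') := by
  have := gp_on_line_nonneg (hρ.neg) z (r := -r) (r' := -r') (by linarith) (by linarith)
  simpa using this

/-- Gromov products along the approximating ray. -/
lemma rayGP [ProperSpace X] (geo : GeodesicSpace X) (hyp : DeltaHyp X δ) (hδ : 0 ≤ δ)
    (hρ : IsLine ρ) {base : X} {Ra : ℝ → X} {cs : ℕ → ℝ → X}
    (hcs : ∀ n : ℕ, GSeg (cs n) (dist base (ρ n)) base (ρ n))
    (h0 : Ra 0 = base)
    (hdist : ∀ r r' : ℝ, 0 ≤ r → 0 ≤ r' → dist (Ra r) (Ra r') = |r - r'|)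
    (hconv : ∀ r : ℝ, 0 ≤ r → ∀ ε : ℝ, 0 < ε →
      {n : ℕ | r ≤ dist base (ρ n) ∧ dist (Ra r) (cs n r) ≤ ε} ∈ Unf)
    {r m : ℝ} (hr : 0 ≤ r) (hm : r + dist base (ρ 0) + 1 ≤ m) :
    r - 1 - 6 * δ ≤ gp base (Ra r) (ρ m) := by
  set C₀ := dist base (ρ 0) with hC₀
  -- pick a good index n
  have hset : ({n : ℕ | r ≤ dist base (ρ n) ∧ dist (Ra r) (cs n r) ≤ 1} ∩
      {n : ℕ | r + C₀ + 1 ≤ (n : ℝ)}).Nonempty := by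
    refine Ultrafilter.nonempty_of_mem (Filter.inter_mem (hconv r hr 1 one_pos) ?_)
    refine atTop_mem_Unf ?_
    obtain ⟨N, hN⟩ := exists_nat_ge (r + C₀ + 1)
    exact Filter.mem_atTop_sets.2 ⟨N, fun n hn => le_trans hN (by exact_mod_cast hn)⟩
  obtain ⟨n, ⟨hn1, hn2⟩, hn3⟩ := hset
  simp only [mem_setOf_eq] at hn1 hn2 hn3
  have hrn : r ∈ Icc 0 (dist base (ρ n)) := ⟨hr, hn1⟩
  -- T1 : gp base (Ra r) (cs n r) ≥ r - 1/2... use ≥ r - 1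
  have hRrb : dist (Ra r) base = r := by
    have := hdist r 0 hr le_rfl
    rw [h0] at this
    rw [this, sub_zero, abs_of_nonneg hr]
  have hcsb : dist (cs n r) base = r := by
    have := (hcs n).dist_left hrn
    rw [dist_comm]; exact this
  have T1 : r - 1/2 ≤ gp base (Ra r) (cs n r) := by
    simp only [gp]
    rw [hRrb, hcsb]
    linarith
  have T2 : gp base (cs n r) (ρ n) = r := by
    simp only [gp]
    have h1 : dist (cs n r) base = r := hcsb
    have h2 : dist (ρ (n:ℝ)) base = dist base (ρ n) := dist_comm _ _
    have h3 : dist (cs n r) (ρ n) = dist base (ρ n) - r := (hcs n).dist_right hrn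
    rw [h1, h2, h3]; ring
  have T3 : r + 1 ≤ gp base (ρ n) (ρ m) := by
    have := gp_on_line_nonneg hρ base (r := (n:ℝ)) (r' := m)
      (by positivity) (by linarith [hC₀ ▸ dist_nonneg (x := base) (y := ρ 0)])
    have hminnm : r + C₀ + 1 ≤ min ((n:ℝ)) m := le_min hn3 hm
    have hC0nn : (0:ℝ) ≤ C₀ := dist_nonneg
    rw [← hC₀] at this
    linarith
  have h4a := four_point geo hyp base (Ra r) (ρ m) (cs n r)
  have h4b := four_point geo hyp base (cs n r) (ρ m) (ρ n)
  have hT2' : min (gp base (cs n r) (ρ n)) (gp base (ρ n) (ρ m)) ≥ r := by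
    rw [T2]
    exact le_min le_rfl (by linarith)
  have h4b' : r ≤ gp base (cs n r) (ρ m) + 3 * δ := le_trans hT2' h4b
  have h4a' : min (gp base (Ra r) (cs n r)) (gp base (cs n r) (ρ m)) ≤
      gp base (Ra r) (ρ m) + 3 * δ := h4a
  have : min (gp base (Ra r) (cs n r)) (gp base (cs n r) (ρ m)) ≥ r - 1/2 - 3*δ := by
    refine le_min (by linarith) (by linarith)
  linarith [le_trans this h4a']

/-- The constructed ray is asymptotic to the same boundary point as the line. -/
lemma ray_equiv [ProperSpace X] (geo : GeodesicSpace X) (hyp : DeltaHyp X δ) (hδ : 0 ≤ δ)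
    (hρ : IsLine ρ) {base : X} {Ra : ℝ → X} {cs : ℕ → ℝ → X}
    (hcs : ∀ n : ℕ, GSeg (cs n) (dist base (ρ n)) base (ρ n))
    (h0 : Ra 0 = base)
    (hdist : ∀ r r' : ℝ, 0 ≤ r → 0 ≤ r' → dist (Ra r) (Ra r') = |r - r'|)
    (hconv : ∀ r : ℝ, 0 ≤ r → ∀ ε : ℝ, 0 < ε →
      {n : ℕ | r ≤ dist base (ρ n) ∧ dist (Ra r) (cs n r) ≤ ε} ∈ Unf)
    {v' : ℕ → X} {σ'' : ℕ → ℝ} (hσ'' : Tendsto σ'' atTop atTop)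
    (hv'g : IsGromovSeq v')
    (hv' : ∀ z : X, Tendsto (fun i => gp z (ρ (σ'' i)) (v' i)) atTop atTop) :
    ∃ τ : ℕ → ℝ, (∀ i, 0 ≤ τ i) ∧ Tendsto τ atTop atTop ∧
      GromovEquiv (fun i => Ra (τ i)) v' := by
  set C₀ := dist base (ρ 0) with hC₀
  set τ : ℕ → ℝ := fun i => max 0 (min (i : ℝ) (σ'' i - C₀ - 1)) with hτ
  have hτ0 : ∀ i, 0 ≤ τ i := fun i => le_max_left _ _
  have hτtop : Tendsto τ atTop atTop := by
    rw [Filter.tendsto_atTop]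
    intro b
    have h1 : ∀ᶠ i : ℕ in atTop, b ≤ (i:ℝ) := by
      obtain ⟨N, hN⟩ := exists_nat_ge b
      exact Filter.eventually_atTop.2 ⟨N, fun i hi => le_trans hN (by exact_mod_cast hi)⟩
    have h2 : ∀ᶠ i : ℕ in atTop, b ≤ σ'' i - C₀ - 1 := by
      have := Filter.tendsto_atTop.mp hσ'' (b + C₀ + 1)
      exact this.mono fun i hi => by linarith
    filter_upwards [h1, h2] with i hi1 hi2
    exact le_trans (le_min hi1 hi2) (le_max_right _ _)
  have hgprays : ∀ i j : ℕ, gp base (Ra (τ i)) (Ra (τ j)) = min (τ i) (τ j) := by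
    intro i j
    have h1 : dist (Ra (τ i)) base = τ i := by
      have := hdist (τ i) 0 (hτ0 i) le_rfl
      rw [h0] at this
      rw [this, sub_zero, abs_of_nonneg (hτ0 i)]
    have h2 : dist (Ra (τ j)) base = τ j := by
      have := hdist (τ j) 0 (hτ0 j) le_rfl
      rw [h0] at this
      rw [this, sub_zero, abs_of_nonneg (hτ0 j)]
    have h3 : dist (Ra (τ i)) (Ra (τ j)) = |τ i - τ j| := hdist _ _ (hτ0 i) (hτ0 j)
    simp only [gp]
    rw [h1, h2, h3]
    rcases abs_cases (τ i - τ j) with ⟨h, h'⟩ | ⟨h, h'⟩ <;> rw [h] <;>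
      rcases min_cases (τ i) (τ j) with ⟨hm, _⟩ | ⟨hm, _⟩ <;> rw [hm] <;> linarith
  refine ⟨τ, hτ0, hτtop, ?_, hv'g, ?_⟩
  · -- IsGromovSeq (Ra ∘ τ)
    intro z
    rw [Filter.tendsto_atTop]
    intro b
    have hev : ∀ᶠ i in (atTop : Filter ℕ), b + dist z base ≤ τ i :=
      Filter.tendsto_atTop.mp hτtop (b + dist z base)
    rw [← prod_atTop_atTop_eq]
    have h1 : ∀ᶠ p : ℕ × ℕ in atTop ×ˢ atTop, b + dist z base ≤ τ p.1 :=
      hev.prod_inl atTop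
    have h2 : ∀ᶠ p : ℕ × ℕ in atTop ×ˢ atTop, b + dist z base ≤ τ p.2 :=
      hev.prod_inr atTop
    filter_upwards [h1, h2] with p hp1 hp2
    have := gp_base_change z base (Ra (τ p.1)) (Ra (τ p.2))
    rw [hgprays p.1 p.2] at this
    have : min (τ p.1) (τ p.2) - dist z base ≤ gp z (Ra (τ p.1)) (Ra (τ p.2)) := by
      have hd : dist z base = dist base z := dist_comm _ _
      linarith [this, hd ▸ this]
    have hmin : b + dist z base ≤ min (τ p.1) (τ p.2) := le_min hp1 hp2
    linarith
  · -- pairing with v'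
    intro z
    rw [Filter.tendsto_atTop]
    intro b
    have hraybd : ∀ᶠ i in (atTop : Filter ℕ),
        τ i - 1 - 6*δ ≤ gp base (Ra (τ i)) (ρ (σ'' i)) := by
      have hev : ∀ᶠ i in (atTop : Filter ℕ), C₀ + 1 ≤ σ'' i :=
        Filter.tendsto_atTop.mp hσ'' (C₀ + 1)
      filter_upwards [hev] with i hi
      refine rayGP geo hyp hδ hρ hcs h0 hdist hconv (hτ0 i) ?_
      have : τ i ≤ σ'' i - C₀ - 1 := by
        simp only [hτ]
        rcases le_or_gt 0 (min (i:ℝ) (σ'' i - C₀ - 1)) with h | h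
        · rw [max_eq_right h]; exact min_le_right _ _
        · rw [max_eq_left h.le]; linarith
      linarith
    have hv'z := Filter.tendsto_atTop.mp (hv' z) (b + 3*δ)
    have hτz := Filter.tendsto_atTop.mp hτtop (b + 3*δ + 1 + 6*δ + dist z base)
    filter_upwards [hraybd, hv'z, hτz] with i h1 h2 h3
    have h4 := four_point geo hyp z (Ra (τ i)) (v' i) (ρ (σ'' i))
    have h5 : gp z (Ra (τ i)) (ρ (σ'' i)) ≥ gp base (Ra (τ i)) (ρ (σ'' i)) - dist z base := by
      have := gp_base_change z base (Ra (τ i)) (ρ (σ'' i))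
      exact this
    have hmin : b + 3*δ ≤ min (gp z (Ra (τ i)) (ρ (σ'' i))) (gp z (ρ (σ'' i)) (v' i)) := by
      refine le_min ?_ h2
      linarith
    linarith

end RayEnd
section SharedEnd

variable {X : Type*} [MetricSpace X] {δ : ℝ}

/-- If `gp (γ a) (γ b) x` is small, then `x` projects near `a` (or the segment is short). -/
lemma proj_of_gp_small (geo : GeodesicSpace X) (hyp : DeltaHyp X δ) (hδ : 0 ≤ δ)
    {γ : ℝ → X} (hγ : IsLine γ) {a b : ℝ} (hab : a ≤ b) (x : X) {e G : ℝ}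
    (hmin : ∀ t, dist x (γ e) ≤ dist x (γ t))
    (hg : gp (γ a) (γ b) x ≤ G) :
    e ≤ a + G + 2 * δ ∨ b - a ≤ 2 * G + 2 * δ := by
  have hG0 : 0 ≤ G := le_trans (gp_nonneg _ _ _) hg
  have hba : dist (γ b) (γ a) = b - a := by
    rw [hγ, abs_of_nonneg (by linarith)]
  have hgexp : (b - a) + dist x (γ a) - dist (γ b) x ≤ 2 * G := by
    simp only [gp, hba] at hg
    linarith
  have hF0 := F0 geo hyp hδ hγ hmin a
  have hup : dist (γ b) x ≤ |b - e| + dist x (γ e) := by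
    have h1 := dist_triangle (γ b) (γ e) x
    have h2 : dist (γ b) (γ e) = |b - e| := hγ b e
    have h3 : dist (γ e) x = dist x (γ e) := dist_comm _ _
    linarith
  have hstar : |b - e| - |a - e| ≥ (b - a) - 2 * G - 4 * δ := by linarith
  rcases lt_or_ge e a with h | h
  · left; linarith
  rcases le_or_gt e b with h' | h'
  · left
    rw [abs_of_nonneg (by linarith), abs_of_nonpos (by linarith)] at hstar
    linarith
  · right
    rw [abs_of_nonpos (by linarith), abs_of_nonpos (by linarith)] at hstar
    linarith

/-- Points far out on two lines sharing their negative end have large Gromov products. -/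
lemma shared_end_gp (geo : GeodesicSpace X) (hyp : DeltaHyp X δ) (hδ : 0 ≤ δ)
    {γ ρ : ℝ → X} (hγ : IsLine γ) (hρ : IsLine ρ) {w : ℕ → X} {σγ σρ : ℕ → ℝ}
    (hw : IsGromovSeq w)
    (hσγ : Tendsto σγ atTop atBot)
    (hwγ : ∀ z : X, Tendsto (fun i => gp z (γ (σγ i)) (w i)) atTop atTop)
    (hσρ : Tendsto σρ atTop atBot)
    (hwρ : ∀ z : X, Tendsto (fun i => gp z (ρ (σρ i)) (w i)) atTop atTop)
    (z : X) (R : ℝ) :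
    ∃ N : ℝ, 0 ≤ N ∧ ∀ n n' : ℝ, N ≤ n → N ≤ n' → R ≤ gp z (ρ (-n)) (γ (-n')) := by
  set B := max (R + 12 * δ) 0 with hB
  have hB0 : 0 ≤ B := le_max_right _ _
  have hBR : R + 12 * δ ≤ B := le_max_left _ _
  set Kρ := dist z (ρ 0) with hKρ
  set Kγ := dist z (γ 0) with hKγ
  -- choose i
  have hev1 : ∀ᶠ i : ℕ in atTop, B ≤ gp z (ρ (σρ i)) (w i) := Filter.tendsto_atTop.mp (hwρ z) B
  have hev2 : ∀ᶠ i : ℕ in atTop, σρ i ≤ -(B + Kρ) := Filter.tendsto_atBot.mp hσρ (-(B + Kρ))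
  have hev3 : ∀ᶠ j : ℕ in atTop, B ≤ gp z (γ (σγ j)) (w j) := Filter.tendsto_atTop.mp (hwγ z) B
  have hev4 : ∀ᶠ j : ℕ in atTop, σγ j ≤ -(B + Kγ) := Filter.tendsto_atBot.mp hσγ (-(B + Kγ))
  have hev5 : ∀ᶠ p : ℕ × ℕ in atTop, B ≤ gp z (w p.1) (w p.2) := Filter.tendsto_atTop.mp (hw z) B
  obtain ⟨P, hP⟩ := Filter.eventually_atTop.1 hev5
  obtain ⟨I1, hI1⟩ := Filter.eventually_atTop.1 hev1
  obtain ⟨I2, hI2⟩ := Filter.eventually_atTop.1 hev2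
  obtain ⟨J3, hJ3⟩ := Filter.eventually_atTop.1 hev3
  obtain ⟨J4, hJ4⟩ := Filter.eventually_atTop.1 hev4
  set i := max I1 (max I2 P.1) with hidef
  set j := max J3 (max J4 P.2) with hjdef
  have hwi : B ≤ gp z (ρ (σρ i)) (w i) := hI1 i (le_max_left _ _)
  have hσρi : σρ i ≤ -(B + Kρ) := hI2 i (le_trans (le_max_left _ _) (le_max_right _ _))
  have hwj : B ≤ gp z (γ (σγ j)) (w j) := hJ3 j (le_max_left _ _)
  have hσγj : σγ j ≤ -(B + Kγ) := hJ4 j (le_trans (le_max_left _ _) (le_max_right _ _))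
  have hwij : B ≤ gp z (w i) (w j) := by
    refine hP (i, j) ?_
    refine Prod.mk_le_mk.2 ⟨?_, ?_⟩
    · exact le_trans (le_max_right _ _) (le_max_right _ _)
    · exact le_trans (le_max_right _ _) (le_max_right _ _)
  have hKρ0 : 0 ≤ Kρ := dist_nonneg
  have hKγ0 : 0 ≤ Kγ := dist_nonneg
  refine ⟨B + max Kρ Kγ, by positivity, fun n n' hn hn' => ?_⟩
  have hn0 : 0 ≤ n := le_trans (by positivity) hn
  have hn'0 : 0 ≤ n' := le_trans (by positivity) hn'
  have Ta : B ≤ gp z (ρ (-n)) (ρ (σρ i)) := by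
    have hb := gp_on_line_nonpos hρ z (r := -n) (r' := σρ i) (by linarith) (by linarith)
    have hmin : B + Kρ ≤ min (-(-n)) (-(σρ i)) := by
      refine le_min ?_ (by linarith)
      have : B + Kρ ≤ B + max Kρ Kγ := by
        have := le_max_left Kρ Kγ; linarith
      simp only [neg_neg]; linarith
    linarith
  have Tb : B ≤ gp z (γ (σγ j)) (γ (-n')) := by
    have hb := gp_on_line_nonpos hγ z (r := σγ j) (r' := -n') (by linarith) (by linarith)
    have hmin : B + Kγ ≤ min (-(σγ j)) (-(-n')) := by
      refine le_min (by linarith) ?_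
      have : B + Kγ ≤ B + max Kρ Kγ := by
        have := le_max_right Kρ Kγ; linarith
      simp only [neg_neg]; linarith
    linarith
  have f4 := four_point geo hyp z (w j) (γ (-n')) (γ (σγ j))
  have L4 : B - 3*δ ≤ gp z (w j) (γ (-n')) := by
    have hcomm : gp z (w j) (γ (σγ j)) = gp z (γ (σγ j)) (w j) := gp_comm _ _ _
    have hmin : B ≤ min (gp z (w j) (γ (σγ j))) (gp z (γ (σγ j)) (γ (-n'))) := by
      refine le_min (by rw [hcomm]; exact hwj) Tb
    linarith
  have f3 := four_point geo hyp z (w i) (γ (-n')) (w j)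
  have L3 : B - 6*δ ≤ gp z (w i) (γ (-n')) := by
    have hmin : B - 3*δ ≤ min (gp z (w i) (w j)) (gp z (w j) (γ (-n'))) :=
      le_min (by linarith) L4
    linarith
  have f2 := four_point geo hyp z (ρ (σρ i)) (γ (-n')) (w i)
  have L2 : B - 9*δ ≤ gp z (ρ (σρ i)) (γ (-n')) := by
    have hmin : B - 6*δ ≤ min (gp z (ρ (σρ i)) (w i)) (gp z (w i) (γ (-n'))) :=
      le_min (by linarith) L3
    linarith
  have f1 := four_point geo hyp z (ρ (-n)) (γ (-n')) (ρ (σρ i))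
  have L1 : B - 12*δ ≤ gp z (ρ (-n)) (γ (-n')) := by
    have hmin : B - 9*δ ≤ min (gp z (ρ (-n)) (ρ (σρ i))) (gp z (ρ (σρ i)) (γ (-n'))) :=
      le_min (by linarith) L2
    linarith
  linarith

end SharedEnd
section ExitData

variable {X : Type*} [MetricSpace X] {δ : ℝ}

lemma exit_data [ProperSpace X] (geo : GeodesicSpace X) (hyp : DeltaHyp X δ) (hδ : 0 ≤ δ)
    {γ ρ : ℝ → X} (hγ : IsLine γ) (hρ : IsLine ρ) {a b D : ℝ} (hab : a ≤ b)
    {v' : ℕ → X} {σ'' : ℕ → ℝ} (hσ'' : Tendsto σ'' atTop atTop) (hv'g : IsGromovSeq v')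
    (hv' : ∀ z : X, Tendsto (fun i => gp z (ρ (σ'' i)) (v' i)) atTop atTop)
    (Hproj : ∀ η : ℕ → X, IsGromovSeq η → ∀ p : X,
      IsQuasiCentroid 1 0 (3 * δ) p (Sum.inr η) (Sum.inl (γ a)) (Sum.inl (γ b)) →
      dist p (γ a) ≤ D ∨ dist p (γ b) ≤ D) :
    ∃ gstar : ℝ, gstar ∈ Icc 0 (b - a) ∧ (gstar ≤ D ∨ (b - a) - D ≤ gstar) ∧
      ∀ ε : ℝ, 0 < ε → {m : ℕ | |gp (γ a) (γ b) (ρ m) - gstar| ≤ ε} ∈ Unf := by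
  set g : ℕ → ℝ := fun m => gp (γ a) (γ b) (ρ m) with hgdef
  have hba : dist (γ b) (γ a) = b - a := by rw [hγ, abs_of_nonneg (by linarith)]
  have hgIcc : ∀ m, g m ∈ Icc 0 (b - a) := by
    intro m
    exact ⟨gp_nonneg _ _ _, le_trans (gp_le_left _ _ _) (le_of_eq hba)⟩
  obtain ⟨gstar, hgstarIcc, hgtend⟩ := exists_ulim_real g hgIcc
  obtain ⟨Ra, csa, hcsa, hRa0, hRad, hRac⟩ := exists_ray geo hρ (γ a)
  obtain ⟨Rb, csb, hcsb, hRb0, hRbd, hRbc⟩ := exists_ray geo hρ (γ b)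
  -- notation
  set da : ℕ → ℝ := fun n => dist (γ a) (ρ n) with hda
  set db : ℕ → ℝ := fun n => dist (γ b) (ρ n) with hdb
  have hident : ∀ n : ℕ, db n = (b - a) + da n - 2 * g n := by
    intro n
    have : g n = (dist (γ b) (γ a) + dist (ρ n) (γ a) - dist (γ b) (ρ n)) / 2 := rfl
    have hcomm : dist (ρ (n:ℝ)) (γ a) = da n := dist_comm _ _
    simp only [hdb]
    rw [this, hba] at *
    simp only [hda] at hcomm
    linarith [this, hcomm]
  -- the approximate centroids
  have hpn : ∀ n : ℕ, dist (γ (a + g n)) (ρ n) ≤ da n - g n + 2 * δ := by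
    intro n
    have h₁ := hγ.gsegLR hab
    have hgmem : g n ∈ Icc 0 (b - a) := hgIcc n
    obtain ⟨u, hu, hdu⟩ := rips hyp h₁ (hcsb n) (hcsa n) hgmem
    have hdu' : dist (γ (a + g n)) u ≤ δ := hdu
    have hpa : dist (γ a) (γ (a + g n)) = g n := by
      rw [hγ]
      rw [show a - (a + g n) = -(g n) by ring, abs_neg, abs_of_nonneg (hgIcc n).1]
    have hpb : dist (γ b) (γ (a + g n)) = (b - a) - g n := by
      rw [hγ, abs_of_nonneg (by linarith [(hgIcc n).2])]
      ring
    rcases hu with ⟨t, ht, rfl⟩ | ⟨t, ht, rfl⟩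
    · -- on [γ b, ρ n]
      have A : dist (γ b) (csb n t) = t := (hcsb n).dist_left ht
      have B : dist (csb n t) (ρ n) = db n - t := by
        have := (hcsb n).dist_right ht; rwa [(hcsb n).len] at this
      have hT : (b - a) - g n - δ ≤ t := by
        have h1 := dist_triangle (γ b) (csb n t) (γ (a + g n))
        have h2 : dist (csb n t) (γ (a + g n)) = dist (γ (a + g n)) (csb n t) := dist_comm _ _
        rw [A] at h1
        rw [hpb] at h1
        linarith
      have h3 := dist_triangle (γ (a + g n)) (csb n t) (ρ n)
      rw [B] at h3
      rw [hident n] at h3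
      linarith
    · -- on [γ a, ρ n]
      have A : dist (γ a) (csa n t) = t := (hcsa n).dist_left ht
      have B : dist (csa n t) (ρ n) = da n - t := by
        have := (hcsa n).dist_right ht; rwa [(hcsa n).len] at this
      have hT : g n - δ ≤ t := by
        have h1 := dist_triangle (γ a) (csa n t) (γ (a + g n))
        have h2 : dist (csa n t) (γ (a + g n)) = dist (γ (a + g n)) (csa n t) := dist_comm _ _
        rw [A, hpa] at h1
        linarith
      have h3 := dist_triangle (γ (a + g n)) (csa n t) (ρ n)
      rw [B] at h3
      linarith
  have hpa' : ∀ n : ℕ, dist (γ a) (γ (a + g n)) = g n := by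
    intro n
    rw [hγ, show a - (a + g n) = -(g n) by ring, abs_neg, abs_of_nonneg (hgIcc n).1]
  have hpb' : ∀ n : ℕ, dist (γ b) (γ (a + g n)) = (b - a) - g n := by
    intro n
    rw [hγ, abs_of_nonneg (by linarith [(hgIcc n).2])]; ring
  have hcga : ∀ n : ℕ, gp (γ (a + g n)) (γ a) (ρ n) ≤ δ := by
    intro n
    simp only [gp]
    have h1 := hpn n
    have h2 : dist (ρ (n:ℝ)) (γ (a + g n)) = dist (γ (a + g n)) (ρ n) := dist_comm _ _
    have h3 : dist (γ a) (ρ (n:ℝ)) = da n := rfl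
    rw [hpa' n] at *
    linarith [hpa' n]
  have hcgb : ∀ n : ℕ, gp (γ (a + g n)) (γ b) (ρ n) ≤ δ := by
    intro n
    simp only [gp]
    have h1 := hpn n
    have h2 : dist (ρ (n:ℝ)) (γ (a + g n)) = dist (γ (a + g n)) (ρ n) := dist_comm _ _
    have h3 : dist (γ b) (ρ (n:ℝ)) = db n := rfl
    rw [hident n] at h3
    rw [hpb' n] at *
    linarith [hpb' n]
  -- B2 points on the two sides
  have hBa : ∀ n : ℕ, ∃ r, r ∈ Icc 0 (da n) ∧ r ≤ (b - a) + 3*δ ∧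
      dist (γ (a + g n)) (csa n r) ≤ 3 * δ := by
    intro n
    obtain ⟨r, hrI, hr⟩ := exists_dist_le_gp_add geo hyp (hcsa n) (γ (a + g n))
    have hr3 : dist (γ (a + g n)) (csa n r) ≤ 3*δ := by
      have := hcga n
      linarith
    refine ⟨r, by rwa [(hcsa n).len.symm] at hrI, ?_, hr3⟩
    have h1 : dist (γ a) (csa n r) = r := (hcsa n).dist_left (by rwa [(hcsa n).len.symm] at hrI)
    have h2 := dist_triangle (γ a) (γ (a + g n)) (csa n r)
    rw [h1, hpa' n] at h2
    linarith [(hgIcc n).2]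
  have hBb : ∀ n : ℕ, ∃ r, r ∈ Icc 0 (db n) ∧ r ≤ (b - a) + 3*δ ∧
      dist (γ (a + g n)) (csb n r) ≤ 3 * δ := by
    intro n
    obtain ⟨r, hrI, hr⟩ := exists_dist_le_gp_add geo hyp (hcsb n) (γ (a + g n))
    have hr3 : dist (γ (a + g n)) (csb n r) ≤ 3*δ := by
      have := hcgb n
      linarith
    refine ⟨r, by rwa [(hcsb n).len.symm] at hrI, ?_, hr3⟩
    have h1 : dist (γ b) (csb n r) = r := (hcsb n).dist_left (by rwa [(hcsb n).len.symm] at hrI)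
    have h2 := dist_triangle (γ b) (γ (a + g n)) (csb n r)
    rw [h1, hpb' n] at h2
    linarith [(hgIcc n).1]
  choose ra hraI hrabd hra using hBa
  choose rb hrbI hrbbd hrb using hBb
  obtain ⟨rstar, hrstarI, hrstartend⟩ := exists_ulim_real ra
    (fun n => ⟨(hraI n).1, hrabd n⟩ : ∀ n, ra n ∈ Icc 0 ((b-a) + 3*δ))
  obtain ⟨sstar, hsstarI, hsstartend⟩ := exists_ulim_real rb
    (fun n => ⟨(hrbI n).1, hrbbd n⟩ : ∀ n, rb n ∈ Icc 0 ((b-a) + 3*δ))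
  set pstar := γ (a + gstar) with hpstardef
  have hclosegen : ∀ (R : ℝ → X) (cs : ℕ → ℝ → X) (rr : ℕ → ℝ) (rs : ℝ) (base : X),
      (∀ n : ℕ, GSeg (cs n) (dist base (ρ n)) base (ρ n)) →
      (∀ r : ℝ, 0 ≤ r → ∀ ε : ℝ, 0 < ε →
        {n : ℕ | r ≤ dist base (ρ n) ∧ dist (R r) (cs n r) ≤ ε} ∈ Unf) →
      (∀ n : ℕ, rr n ∈ Icc 0 (dist base (ρ (n:ℝ)))) →
      (∀ n, dist (γ (a + g n)) (cs n (rr n)) ≤ 3 * δ) →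
      0 ≤ rs → Tendsto rr (Unf : Filter ℕ) (nhds rs) →
      dist pstar (R rs) ≤ 3 * δ := by
    intro R cs rr rs base hcs hRc hrrI hrr hrs0 hrrtend
    refine le_of_forall_pos_le_add fun ε hε => ?_
    have hε4 : 0 < ε / 4 := by linarith
    have S1 : {n : ℕ | dist (g n) gstar < ε/4} ∈ Unf :=
      Metric.tendsto_nhds.mp hgtend (ε/4) hε4
    have S2 : {n : ℕ | dist (rr n) rs < ε/4} ∈ Unf :=
      Metric.tendsto_nhds.mp hrrtend (ε/4) hε4
    have S3 := hRc rs hrs0 (ε/4) hε4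
    obtain ⟨n, ⟨hn1, hn2⟩, hn3, hn4⟩ :=
      Ultrafilter.nonempty_of_mem (Filter.inter_mem (Filter.inter_mem S1 S2) S3)
    simp only [mem_setOf_eq] at hn1 hn2
    have e1 : dist pstar (γ (a + g n)) = dist gstar (g n) := by
      rw [hγ, Real.dist_eq]
      rw [show a + gstar - (a + g n) = gstar - g n by ring]
    have e2 : dist (cs n (rr n)) (cs n rs) = dist (rr n) rs := by
      have h1 : rr n ∈ Icc 0 (dist base (ρ n)) := hrrI n
      have h2 : rs ∈ Icc 0 (dist base (ρ n)) := ⟨hrs0, hn3⟩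
      rw [(hcs n).2.1 (rr n) h1 rs h2, Real.dist_eq]
    have chain : dist pstar (R rs) ≤ dist pstar (γ (a + g n)) + dist (γ (a + g n)) (cs n (rr n))
        + dist (cs n (rr n)) (cs n rs) + dist (cs n rs) (R rs) := by
      calc dist pstar (R rs) ≤ dist pstar (cs n rs) + dist (cs n rs) (R rs) := dist_triangle _ _ _
      _ ≤ (dist pstar (cs n (rr n)) + dist (cs n (rr n)) (cs n rs)) + dist (cs n rs) (R rs) := by
          linarith [dist_triangle pstar (cs n (rr n)) (cs n rs)]
      _ ≤ _ := by linarith [dist_triangle pstar (γ (a + g n)) (cs n (rr n))]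
    have hsym : dist gstar (g n) = dist (g n) gstar := dist_comm _ _
    have hsym2 : dist (cs n rs) (R rs) = dist (R rs) (cs n rs) := dist_comm _ _
    rw [e1, e2] at chain
    rw [hsym] at chain
    rw [hsym2] at chain
    linarith [hrr n]
  have hpstar_a : dist pstar (Ra rstar) ≤ 3*δ :=
    hclosegen Ra csa ra rstar (γ a) hcsa hRac hraI hra hrstarI.1 hrstartend
  have hpstar_b : dist pstar (Rb sstar) ≤ 3*δ :=
    hclosegen Rb csb rb sstar (γ b) hcsb hRbc hrbI hrb hsstarI.1 hsstartend
  obtain ⟨τa, hτa0, hτatop, hτaeq⟩ := ray_equiv geo hyp hδ hρ hcsa hRa0 hRad hRac hσ'' hv'g hv'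
  obtain ⟨τb, hτb0, hτbtop, hτbeq⟩ := ray_equiv geo hyp hδ hρ hcsb hRb0 hRbd hRbc hσ'' hv'g hv'
  -- assemble the quasi-centroid
  have hcent : IsQuasiCentroid 1 0 (3 * δ) pstar (Sum.inr v') (Sum.inl (γ a))
      (Sum.inl (γ b)) := by
    refine ⟨fun t => Ra (-t), γ, fun t => Rb (-t), Iic 0, Icc a b, Iic 0, ?_, ?_, ?_, ?_, ?_, ?_⟩
    · -- IsQGeodJoining 1 0 (Ra ∘ neg) (Iic 0) v' (γ a)
      refine ⟨⟨0, Set.mem_Iic.2 le_rfl⟩, Set.ordConnected_Iic, ?_, ?_, ?_⟩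
      · intro s hs t ht
        have : dist (Ra (-s)) (Ra (-t)) = |s - t| := by
          rw [hRad (-s) (-t) (by simpa using hs) (by simpa using ht)]
          rw [show -s - -t = -(s - t) by ring, abs_neg]
        rw [this]
        constructor <;> simp
      · show ∃ σ : ℕ → ℝ, (∀ n, σ n ∈ Iic 0) ∧ Tendsto σ atTop atBot ∧
          GromovEquiv (fun n => Ra (-(σ n))) v'
        refine ⟨fun n => -(τa n), fun n => by simpa using hτa0 n, ?_, ?_⟩
        · rw [Filter.tendsto_atBot]
          intro bb
          exact (Filter.tendsto_atTop.mp hτatop (-bb)).mono fun i hi => by linarith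
        · have : (fun n => Ra (-(-(τa n)))) = fun n => Ra (τa n) := by
            funext n; rw [neg_neg]
          rw [this]
          exact hτaeq
      · show ∃ s ∈ Iic (0:ℝ), Ra (-s) = γ a ∧ ∀ t ∈ Iic (0:ℝ), t ≤ s
        refine ⟨0, Set.mem_Iic.2 le_rfl, ?_, fun t ht => ht⟩
        show Ra (-0) = γ a
        rw [neg_zero]; exact hRa0
    · -- IsQGeodJoining 1 0 γ (Icc a b) (γ a) (γ b)
      refine ⟨⟨a, Set.mem_Icc.2 ⟨le_rfl, hab⟩⟩, Set.ordConnected_Icc, ?_, ?_, ?_⟩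
      · intro s _ t _
        rw [hγ s t]
        constructor <;> simp
      · exact ⟨a, Set.mem_Icc.2 ⟨le_rfl, hab⟩, rfl, fun t ht => ht.1⟩
      · exact ⟨b, Set.mem_Icc.2 ⟨hab, le_rfl⟩, rfl, fun t ht => ht.2⟩
    · -- IsQGeodJoining 1 0 (Rb ∘ neg) (Iic 0) v' (γ b)
      refine ⟨⟨0, Set.mem_Iic.2 le_rfl⟩, Set.ordConnected_Iic, ?_, ?_, ?_⟩
      · intro s hs t ht
        have : dist (Rb (-s)) (Rb (-t)) = |s - t| := by
          rw [hRbd (-s) (-t) (by simpa using hs) (by simpa using ht)]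
          rw [show -s - -t = -(s - t) by ring, abs_neg]
        rw [this]
        constructor <;> simp
      · show ∃ σ : ℕ → ℝ, (∀ n, σ n ∈ Iic 0) ∧ Tendsto σ atTop atBot ∧
          GromovEquiv (fun n => Rb (-(σ n))) v'
        refine ⟨fun n => -(τb n), fun n => by simpa using hτb0 n, ?_, ?_⟩
        · rw [Filter.tendsto_atBot]
          intro bb
          exact (Filter.tendsto_atTop.mp hτbtop (-bb)).mono fun i hi => by linarith
        · have : (fun n => Rb (-(-(τb n)))) = fun n => Rb (τb n) := by
            funext n; rw [neg_neg]
          rw [this]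
          exact hτbeq
      · show ∃ s ∈ Iic (0:ℝ), Rb (-s) = γ b ∧ ∀ t ∈ Iic (0:ℝ), t ≤ s
        refine ⟨0, Set.mem_Iic.2 le_rfl, ?_, fun t ht => ht⟩
        show Rb (-0) = γ b
        rw [neg_zero]; exact hRb0
    · refine ⟨-rstar, by simpa using hrstarI.1, ?_⟩
      show dist pstar (Ra (-(-rstar))) ≤ 3*δ
      rw [neg_neg]; exact hpstar_a
    · refine ⟨a + gstar, ⟨by linarith [hgstarIcc.1], by linarith [hgstarIcc.2]⟩, ?_⟩
      rw [dist_self]; positivity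
    · refine ⟨-sstar, by simpa using hsstarI.1, ?_⟩
      show dist pstar (Rb (-(-sstar))) ≤ 3*δ
      rw [neg_neg]; exact hpstar_b
  have hBIT := Hproj v' hv'g pstar hcent
  have hda' : dist pstar (γ a) = gstar := by
    rw [hγ, show a + gstar - a = gstar by ring, abs_of_nonneg hgstarIcc.1]
  have hdb' : dist pstar (γ b) = (b - a) - gstar := by
    rw [hγ, show a + gstar - b = -((b - a) - gstar) by ring, abs_neg,
      abs_of_nonneg (by linarith [hgstarIcc.2])]
  refine ⟨gstar, hgstarIcc, ?_, ?_⟩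
  · rcases hBIT with h | h
    · left; rwa [hda'] at h
    · right; rw [hdb'] at h; linarith
  · intro ε hε
    have := Metric.tendsto_nhds.mp hgtend ε hε
    exact this.mono fun n hn => by
      rw [Real.dist_eq] at hn; exact le_of_lt hn

end ExitData
section ClaimRho

variable {X : Type*} [MetricSpace X] {δ : ℝ}

lemma claim_rho [ProperSpace X] (geo : GeodesicSpace X) (hyp : DeltaHyp X δ) (hδ : 0 ≤ δ)
    {γ ρ : ℝ → X} (hγ : IsLine γ) (hρ : IsLine ρ) {a b D : ℝ}
    (hD : 10000 * δ ≤ D) (hba : 100 * D < b - a)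
    {w v' : ℕ → X} {σγ σρ σ'' : ℕ → ℝ}
    (hw : IsGromovSeq w)
    (hσγ : Tendsto σγ atTop atBot)
    (hwγ : ∀ z : X, Tendsto (fun i => gp z (γ (σγ i)) (w i)) atTop atTop)
    (hσρ : Tendsto σρ atTop atBot)
    (hwρ : ∀ z : X, Tendsto (fun i => gp z (ρ (σρ i)) (w i)) atTop atTop)
    (hσ'' : Tendsto σ'' atTop atTop) (hv'g : IsGromovSeq v')
    (hv' : ∀ z : X, Tendsto (fun i => gp z (ρ (σ'' i)) (v' i)) atTop atTop)
    (Hproj : ∀ η : ℕ → X, IsGromovSeq η → ∀ p : X,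
      IsQuasiCentroid 1 0 (3 * δ) p (Sum.inr η) (Sum.inl (γ a)) (Sum.inl (γ b)) →
      dist p (γ a) ≤ D ∨ dist p (γ b) ≤ D) :
    ∀ s t₀ : ℝ, (∀ t, dist (ρ s) (γ t₀) ≤ dist (ρ s) (γ t)) →
      a + 2*D < t₀ → t₀ < b - 2*D → dist (ρ s) (γ t₀) ≤ 2*δ := by
  have hD0 : 0 ≤ D := le_trans (by positivity) hD
  have hab : a ≤ b := by nlinarith
  obtain ⟨gstar, hgI, hbit, hgU⟩ := exit_data geo hyp hδ hγ hρ hab hσ'' hv'g hv' Hproj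
  choose e he using fun m : ℕ => hγ.exists_min (ρ (m:ℝ))
  intro s t₀ hmin h1 h2
  set P := ρ s with hP
  set dstar := dist (ρ s) (γ t₀) with hdstar
  -- a convenient member of atTop
  have hmem_s : {m : ℕ | s ≤ (m:ℝ)} ∈ (atTop : Filter ℕ) := by
    obtain ⟨M, hM⟩ := exists_nat_ge s
    exact Filter.mem_atTop_sets.2 ⟨M, fun m hm => le_trans hM (by exact_mod_cast hm)⟩
  have hδD : 2 * D + 2 * δ ≤ 100 * D := by nlinarith
  -- common: pick m with g-control and m ≥ s
  have hpick : ∀ ε : ℝ, 0 < ε → ∃ m : ℕ, |gp (γ a) (γ b) (ρ (m:ℝ)) - gstar| ≤ ε ∧ s ≤ (m:ℝ) := by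
    intro ε hε
    obtain ⟨m, hm1, hm2⟩ :=
      Ultrafilter.nonempty_of_mem (Filter.inter_mem (hgU ε hε) (atTop_mem_Unf hmem_s))
    exact ⟨m, hm1, hm2⟩
  rcases hbit with hcase | hcase
  · -- case 1 : exit near a; show the configuration is impossible
    exfalso
    set ε := min ((b - a - 2*D - 2*δ)/4) ((t₀ - a - D - 12*δ)/2) with hε
    have hε1 : 0 < (b - a - 2*D - 2*δ)/4 := by linarith
    have hε2 : 0 < (t₀ - a - D - 12*δ)/2 := by nlinarith
    have hεpos : 0 < ε := lt_min hε1 hε2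
    obtain ⟨m, hm1, hm2⟩ := hpick ε hεpos
    have hgm : gp (γ a) (γ b) (ρ (m:ℝ)) ≤ D + ε := by
      have := abs_le.1 hm1
      linarith [this.1, this.2, hcase]
    have hem : e m ≤ a + D + ε + 2*δ := by
      rcases proj_of_gp_small geo hyp hδ hγ hab (ρ (m:ℝ)) (he m) hgm with h | h
      · linarith
      · exfalso
        have hεb : ε ≤ (b - a - 2*D - 2*δ)/4 := min_le_left _ _
        linarith
    obtain ⟨N, hN0, hA⟩ := shared_end_gp geo hyp hδ hγ hρ hw hσγ hwγ hσρ hwρ P (3*δ + 1)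
    set n := max N (max (-s) 0) with hn
    set n' := max N (max (-t₀) (-(e m))) with hn'
    have hnN : N ≤ n := le_max_left _ _
    have hns : -n ≤ s := by
      have : -s ≤ n := le_trans (le_max_left _ _) (le_max_right _ _)
      linarith
    have hn0 : 0 ≤ n := le_trans (le_max_right _ _) (le_max_right _ _)
    have hn'N : N ≤ n' := le_max_left _ _
    have hn't : -n' ≤ t₀ := by
      have : -t₀ ≤ n' := le_trans (le_max_left _ _) (le_max_right _ _)
      linarith
    have hn'e : -n' ≤ e m := by
      have : -(e m) ≤ n' := le_trans (le_max_right _ _) (le_max_right _ _)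
      linarith
    have hgpA := hA n n' hnN hn'N
    have hsm : s ≤ (m:ℝ) := hm2
    have c1 : gp P (ρ (-n)) (ρ (m:ℝ)) = 0 := by
      simp only [gp]
      have d1 : dist (ρ (-n)) P = s + n := by
        rw [hP, hρ, abs_of_nonpos (by linarith)]; ring
      have d2 : dist (ρ (m:ℝ)) P = (m:ℝ) - s := by
        rw [hP, hρ, abs_of_nonneg (by linarith)]
      have d3 : dist (ρ (-n)) (ρ (m:ℝ)) = (m:ℝ) + n := by
        have hm0 : (0:ℝ) ≤ (m:ℝ) := Nat.cast_nonneg m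
        rw [hρ, abs_of_nonpos (by linarith)]
        ring
      rw [d1, d2, d3]; ring
    have f := four_point geo hyp P (ρ (-n)) (ρ (m:ℝ)) (γ (-n'))
    rw [c1] at f
    have hZ : gp P (γ (-n')) (ρ (m:ℝ)) ≤ 3*δ := by
      rcases min_le_iff.1 (by linarith [f] : min (gp P (ρ (-n)) (γ (-n')))
          (gp P (γ (-n')) (ρ (m:ℝ))) ≤ 3*δ) with h | h
      · linarith
      · exact h
    -- expand hZ
    have b1 : dstar + (t₀ + n') - 4*δ ≤ dist (γ (-n')) P := by
      have := F0 geo hyp hδ hγ hmin (-n')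
      have habs : |(-n') - t₀| = t₀ + n' := by
        rw [abs_of_nonpos (by linarith)]; ring
      rw [habs] at this
      rw [dist_comm]
      exact this
    have b2 : dist (ρ (m:ℝ)) P = (m:ℝ) - s := by
      rw [hP, hρ, abs_of_nonneg (by linarith)]
    have b4 : dist (ρ (m:ℝ)) (γ (e m)) ≤ ((m:ℝ) - s) + dstar := by
      have h5 := he m t₀
      have h6 := dist_triangle (ρ (m:ℝ)) (ρ s) (γ t₀)
      have h7 : dist (ρ (m:ℝ)) (ρ s) = (m:ℝ) - s := by
        rw [hρ, abs_of_nonneg (by linarith)]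
      linarith
    have b3 : dist (γ (-n')) (ρ (m:ℝ)) ≤ (e m + n') + (((m:ℝ) - s) + dstar) := by
      have h5 := dist_triangle (γ (-n')) (γ (e m)) (ρ (m:ℝ))
      have h6 : dist (γ (-n')) (γ (e m)) = e m + n' := by
        rw [hγ, abs_of_nonpos (by linarith)]; ring
      have h7 : dist (γ (e m)) (ρ (m:ℝ)) = dist (ρ (m:ℝ)) (γ (e m)) := dist_comm _ _
      linarith [b4]
    have hfin : t₀ ≤ e m + 10*δ := by
      simp only [gp] at hZ
      linarith
    have hεb : ε ≤ (t₀ - a - D - 12*δ)/2 := min_le_right _ _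
    linarith
  · -- case 2 : exit near b; the line tracks γ through the middle
    set ε := min ((b - a - 2*D - 2*δ)/4) ((b - t₀ - D - 8*δ)/2) with hε
    have hε1 : 0 < (b - a - 2*D - 2*δ)/4 := by linarith
    have hε2 : 0 < (b - t₀ - D - 8*δ)/2 := by nlinarith
    have hεpos : 0 < ε := lt_min hε1 hε2
    obtain ⟨m, hm1, hm2⟩ := hpick ε hεpos
    -- reversed line
    set γ' : ℝ → X := fun t => γ (a + b - t) with hγ'
    have hγ'line : IsLine γ' := by
      intro u v
      simp only [hγ']
      rw [hγ]
      rw [show a + b - u - (a + b - v) = -(u - v) by ring, abs_neg]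
    have hg2 : gp (γ' a) (γ' b) (ρ (m:ℝ)) ≤ D + ε := by
      have hsum : gp (γ a) (γ b) (ρ (m:ℝ)) + gp (γ b) (γ a) (ρ (m:ℝ)) = b - a := by
        simp only [gp]
        have c1 : dist (γ b) (γ a) = b - a := by rw [hγ, abs_of_nonneg (by linarith)]
        have c2 : dist (γ a) (γ b) = b - a := by
          rw [hγ, abs_of_nonpos (by linarith)]; ring
        rw [c1, c2]
        have c3 : dist (ρ (m:ℝ)) (γ a) = dist (γ a) (ρ (m:ℝ)) := dist_comm _ _
        have c4 : dist (ρ (m:ℝ)) (γ b) = dist (γ b) (ρ (m:ℝ)) := dist_comm _ _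
        linarith
      have hγ'a : γ' a = γ b := by simp only [hγ']; congr 1; ring
      have hγ'b : γ' b = γ a := by simp only [hγ']; congr 1; ring
      rw [hγ'a, hγ'b]
      have := abs_le.1 hm1
      linarith [this.1, this.2, hcase]
    have hmin' : ∀ t, dist (ρ (m:ℝ)) (γ' (a + b - e m)) ≤ dist (ρ (m:ℝ)) (γ' t) := by
      intro t
      simp only [hγ']
      have : a + b - (a + b - e m) = e m := by ring
      rw [this]
      exact he m (a + b - t)
    have hem : b - D - ε - 2*δ ≤ e m := by
      rcases proj_of_gp_small geo hyp hδ hγ'line hab (ρ (m:ℝ)) hmin' hg2 with h | h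
      · linarith
      · exfalso
        have hεb : ε ≤ (b - a - 2*D - 2*δ)/4 := min_le_left _ _
        linarith
    have hemt : t₀ + 6*δ < e m := by
      have hεb : ε ≤ (b - t₀ - D - 8*δ)/2 := min_le_right _ _
      linarith
    obtain ⟨N, hN0, hA⟩ := shared_end_gp geo hyp hδ hγ hρ hw hσγ hwγ hσρ hwρ P (3*δ + 2)
    set n := max N (max (-s) 0) with hn
    set n' := max N (max (-(e m)) 0) with hn'
    have hnN : N ≤ n := le_max_left _ _
    have hns : -n ≤ s := by
      have : -s ≤ n := le_trans (le_max_left _ _) (le_max_right _ _)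
      linarith
    have hn0 : 0 ≤ n := le_trans (le_max_right _ _) (le_max_right _ _)
    have hn'N : N ≤ n' := le_max_left _ _
    have hn'e : -n' ≤ e m := by
      have : -(e m) ≤ n' := le_trans (le_max_left _ _) (le_max_right _ _)
      linarith
    have hgpA := hA n n' hnN hn'N
    have hsm : s ≤ (m:ℝ) := hm2
    -- first Rips: triangle (ρ (-n), ρ m, γ (e m))
    have h₁ := hρ.gsegLR (show -n ≤ (m:ℝ) by linarith)
    obtain ⟨c₂, hc₂⟩ := geo.gseg (ρ (m:ℝ)) (γ (e m))
    obtain ⟨c₃, hc₃⟩ := geo.gseg (ρ (-n)) (γ (e m))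
    have hptmem : s - (-n) ∈ Icc (0:ℝ) ((m:ℝ) - (-n)) := ⟨by linarith, by linarith⟩
    obtain ⟨u, hu, hdu⟩ := rips hyp h₁ hc₂ hc₃ hptmem
    have hpt : ρ (-n + (s - -n)) = ρ s := by
      congr 1; ring
    rw [hpt] at hdu
    -- exclusion of c₂
    have hCbound : ∀ t ∈ Icc (0:ℝ) (dist (ρ (m:ℝ)) (γ (e m))), δ < dist P (c₂ t) := by
      intro t ht
      have hb1 := gp_le_dist_geod hc₂ P ht
      have hgpc : (e m - t₀ - 4*δ)/2 ≤ gp P (ρ (m:ℝ)) (γ (e m)) := by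
        simp only [gp]
        have d1 : dist (ρ (m:ℝ)) P = (m:ℝ) - s := by
          rw [hP, hρ, abs_of_nonneg (by linarith)]
        have d2 : dstar + (e m - t₀) - 4*δ ≤ dist (γ (e m)) P := by
          have := F0 geo hyp hδ hγ hmin (e m)
          have habs : e m - t₀ ≤ |e m - t₀| := le_abs_self _
          rw [dist_comm]
          linarith
        have d3 : dist (ρ (m:ℝ)) (γ (e m)) ≤ ((m:ℝ) - s) + dstar := by
          have h5 := he m t₀
          have h6 := dist_triangle (ρ (m:ℝ)) (ρ s) (γ t₀)
          have h7 : dist (ρ (m:ℝ)) (ρ s) = (m:ℝ) - s := by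
            rw [hρ, abs_of_nonneg (by linarith)]
          linarith
        rw [d1]
        linarith
      have : δ < (e m - t₀ - 4*δ)/2 := by linarith
      linarith
    rcases hu with ⟨t, ht, rfl⟩ | ⟨t, ht, rfl⟩
    · exfalso
      have := hCbound t (by rwa [hc₂.len.symm] at ht)
      linarith
    -- u on c₃; second Rips: triangle (ρ (-n), γ (e m), γ (-n'))
    have hγ₂ := hγ.gsegRL (show -n' ≤ e m by linarith)
    obtain ⟨c₄, hc₄⟩ := geo.gseg (ρ (-n)) (γ (-n'))
    obtain ⟨u₂, hu₂, hdu₂⟩ := rips hyp hc₃ hγ₂ hc₄ (by rwa [hc₃.len.symm] at ht)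
    have hexcl : ∀ t4 ∈ Icc (0:ℝ) (dist (ρ (-n)) (γ (-n'))), δ < dist (c₃ t) (c₄ t4) := by
      intro t4 ht4
      have hb1 := gp_le_dist_geod hc₄ (c₃ t) ht4
      have hbc := gp_base_change (c₃ t) P (ρ (-n)) (γ (-n'))
      have hPc : dist P (c₃ t) = dist (c₃ t) P := dist_comm _ _
      have : 2*δ + 2 ≤ gp (c₃ t) (ρ (-n)) (γ (-n')) := by
        have hdPu : dist (c₃ t) P ≤ δ := by rw [← hPc]; exact hdu
        linarith
      linarith
    rcases hu₂ with ⟨t4, ht4, rfl⟩ | ⟨t4, ht4, rfl⟩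
    · -- on γ₂ : near the line γ, done
      have hq := hmin (e m - t4)
      have := dist_triangle P (c₃ t) (γ (e m - t4))
      rw [hdstar] at *
      have : dist (ρ s) (γ t₀) ≤ dist (ρ s) (γ (e m - t4)) := hq
      calc dist (ρ s) (γ t₀) ≤ dist (ρ s) (γ (e m - t4)) := hq
      _ ≤ dist (ρ s) (c₃ t) + dist (c₃ t) (γ (e m - t4)) := dist_triangle _ _ _
      _ ≤ 2*δ := by
          have h9 : dist (ρ s) (c₃ t) ≤ δ := hdu
          linarith [hdu₂]
    · exfalso
      have := hexcl t4 (by rwa [hc₄.len.symm] at ht4)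
      linarith

end ClaimRho
section LineOf

variable {X : Type*} [MetricSpace X]

lemma gp_self (z x : X) : gp z x x = dist x z := by
  simp [gp]

lemma gp_ge_sub (z x y : X) : dist x z - dist x y ≤ gp z x y := by
  have := dist_triangle x y z
  have h2 : dist y z = dist y z := rfl
  simp only [gp]
  have h3 : dist x z ≤ dist x y + dist y z := dist_triangle x y z
  linarith

/-- Extract the line structure from a geodesic joining two boundary points. -/
lemma lineOf {ρ : ℝ → X} {I : Set ℝ} {u₁ u₂ : ℕ → X}
    (h : IsGeodJoining ρ I (Sum.inr u₁) (Sum.inr u₂)) :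
    IsLine ρ ∧
    (∃ σ1 : ℕ → ℝ, Tendsto σ1 atTop atBot ∧ GromovEquiv (fun i => ρ (σ1 i)) u₁) ∧
    (∃ σ2 : ℕ → ℝ, Tendsto σ2 atTop atTop ∧ GromovEquiv (fun i => ρ (σ2 i)) u₂) := by
  obtain ⟨hne, hconn, hd, hL, hR⟩ := h
  obtain ⟨σ1, hmem1, hbot, hequiv1⟩ := hL
  obtain ⟨σ2, hmem2, htop, hequiv2⟩ := hR
  have hIuniv : ∀ x : ℝ, x ∈ I := by
    intro x
    obtain ⟨i, hi⟩ := (Filter.tendsto_atBot.mp hbot x).exists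
    obtain ⟨j, hj⟩ := (Filter.tendsto_atTop.mp htop x).exists
    exact hconn.out (hmem1 i) (hmem2 j) ⟨hi, hj⟩
  exact ⟨fun s t => hd s (hIuniv s) t (hIuniv t), ⟨σ1, hbot, hequiv1⟩, ⟨σ2, htop, hequiv2⟩⟩

end LineOf

section PushFun

/-- The push function on `ℝ`. -/
noncomputable def pushF (α β : ℝ) : ℝ → ℝ :=
  fun t => t + (2/3) * max 0 (min (t - α) (β - t))

namespace pushF

variable {α β : ℝ}

lemma amt_nonneg (t : ℝ) : 0 ≤ (2/3) * max 0 (min (t - α) (β - t)) := by positivity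

lemma amt_le (hαβ : α ≤ β) (t : ℝ) :
    (2/3) * max 0 (min (t - α) (β - t)) ≤ (β - α) / 3 := by
  have h1 : min (t - α) (β - t) ≤ (β - α) / 2 := by
    rcases le_total (t - α) (β - t) with h | h
    · rw [min_eq_left h]; linarith
    · rw [min_eq_right h]; linarith
  have h2 : max 0 (min (t - α) (β - t)) ≤ max 0 ((β - α)/2) := by
    exact max_le_max (le_refl _) h1
  have h3 : max 0 ((β - α)/2) = (β - α)/2 := max_eq_right (by linarith)
  rw [h3] at h2
  linarith

lemma eq_self_of_out (h : t ≤ α ∨ β ≤ t) : pushF α β t = t := by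
  have : min (t - α) (β - t) ≤ 0 := by
    rcases h with h | h
    · exact le_trans (min_le_left _ _) (by linarith)
    · exact le_trans (min_le_right _ _) (by linarith)
  simp only [pushF, max_eq_left this]
  ring

lemma amt_lip (s t : ℝ) :
    |(2/3) * max 0 (min (s - α) (β - s)) - (2/3) * max 0 (min (t - α) (β - t))| ≤
      (2/3) * |s - t| := by
  have h1 : |max 0 (min (s - α) (β - s)) - max 0 (min (t - α) (β - t))| ≤
      |min (s - α) (β - s) - min (t - α) (β - t)| := by
    rw [max_comm 0 (min (s - α) (β - s)), max_comm 0 (min (t - α) (β - t))]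
    exact abs_max_sub_max_le_abs _ _ _
  have h2 : |min (s - α) (β - s) - min (t - α) (β - t)| ≤
      max |(s - α) - (t - α)| |(β - s) - (β - t)| := abs_min_sub_min_le_max _ _ _ _
  have h3 : |(s - α) - (t - α)| = |s - t| := by congr 1; ring
  have h4 : |(β - s) - (β - t)| = |s - t| := by
    rw [show (β - s) - (β - t) = -(s - t) by ring, abs_neg]
  rw [h3, h4, max_self] at h2
  have key : (2/3:ℝ) * max 0 (min (s - α) (β - s)) - (2/3) * max 0 (min (t - α) (β - t)) =
      (2/3) * (max 0 (min (s - α) (β - s)) - max 0 (min (t - α) (β - t))) := by ring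
  rw [key, abs_mul, abs_of_pos (show (0:ℝ) < 2/3 by norm_num)]
  exact mul_le_mul_of_nonneg_left (le_trans h1 h2) (by norm_num)

lemma dist_bounds (s t : ℝ) :
    (1/3) * |s - t| ≤ |pushF α β s - pushF α β t| ∧
      |pushF α β s - pushF α β t| ≤ (5/3) * |s - t| := by
  have hlip := amt_lip (α := α) (β := β) s t
  set A := (2/3) * max 0 (min (s - α) (β - s))
  set B := (2/3) * max 0 (min (t - α) (β - t))
  have hexp : pushF α β s - pushF α β t = (s - t) + (A - B) := by
    simp only [pushF]; ring
  constructor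
  · rw [hexp]
    have h1 := abs_sub_abs_le_abs_sub (s - t) (-(A - B))
    have h2 : |(s - t) - -(A - B)| = |(s - t) + (A - B)| := by congr 1; ring
    have h3 : |(-(A - B))| = |A - B| := abs_neg _
    rw [h2, h3] at h1
    linarith [abs_abs (s - t)]
  · rw [hexp]
    calc |(s - t) + (A - B)| ≤ |s - t| + |A - B| := abs_add_le _ _
    _ ≤ (5/3) * |s - t| := by linarith

lemma strictMono : StrictMono (pushF α β) := by
  intro s t hst
  have h := (dist_bounds (α := α) (β := β) s t).1
  have hlip := amt_lip (α := α) (β := β) s t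
  set A := (2/3) * max 0 (min (s - α) (β - s))
  set B := (2/3) * max 0 (min (t - α) (β - t))
  have hexp : pushF α β t - pushF α β s = (t - s) + (B - A) := by
    simp only [pushF]; ring
  have habs : |s - t| = t - s := by rw [abs_of_nonpos (by linarith)]; ring
  rw [habs] at hlip
  have h3 := (abs_le.1 hlip).1
  have h4 := (abs_le.1 hlip).2
  have hpos : 0 < pushF α β t - pushF α β s := by rw [hexp]; linarith
  linarith

lemma continuous : Continuous (pushF α β) := by
  unfold pushF
  fun_prop

lemma surj (hαβ : α < β) {u : ℝ} (hu : u ∈ Ioo α β) :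
    ∃ t ∈ Ioo α β, pushF α β t = u := by
  have hα : pushF α β α = α := eq_self_of_out (Or.inl le_rfl)
  have hβ : pushF α β β = β := eq_self_of_out (Or.inr le_rfl)
  have hmem : u ∈ Icc (pushF α β α) (pushF α β β) := by
    rw [hα, hβ]; exact ⟨hu.1.le, hu.2.le⟩
  obtain ⟨t, htI, htu⟩ := intermediate_value_Icc hαβ.le continuous.continuousOn hmem
  refine ⟨t, ⟨?_, ?_⟩, htu⟩
  · rcases eq_or_lt_of_le htI.1 with h | h
    · exfalso; rw [← h, hα] at htu; exact absurd htu.symm (ne_of_gt hu.1)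
    · exact h
  · rcases eq_or_lt_of_le htI.2 with h | h
    · exfalso; rw [h, hβ] at htu; exact (ne_of_lt hu.2) htu.symm
    · exact h

lemma mid_val (hαβ : α ≤ β) : pushF α β ((α + β)/2) = (α + β)/2 + (β - α)/3 := by
  have h1 : min ((α + β)/2 - α) (β - (α + β)/2) = (β - α)/2 := by
    rw [show (α + β)/2 - α = (β - α)/2 by ring, show β - (α + β)/2 = (β - α)/2 by ring, min_self]
  have h2 : max 0 ((β - α)/2) = (β - α)/2 := max_eq_right (by linarith)
  simp only [pushF, h1, h2]
  ring

end pushF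

end PushFun
set_option maxHeartbeats 2000000

/-- **Definition 3.10 / Lemma 3.11.** In the standard setup there is a map
`Φ : X → X` which fixes `X_y(3D) ∪ X_z(3D)` pointwise (hence induces the identity on
`∂X`), has displacement at least `l/3` where `l = d(y',z') = (b - a) - 6D` is the length
of the largest subsegment of `[y,z]` outside the `3D`-neighborhood of `{y,z}`, has
`(L+3δ)`-roughly full image, and is a `(K',C')`-quasi-isometry with `K', C'` depending
only on `D`, `δ` and `L`. -/
theorem exists_pushing_quasiIsometry
    (δ L D₀ : ℝ) (hδ : 0 ≤ δ) (hL : 0 ≤ L) (hD₀nn : 0 ≤ D₀) :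
    ∃ K' C' : ℝ, 1 ≤ K' ∧ 0 ≤ C' ∧
      ∀ (X : Type u) [MetricSpace X] [ProperSpace X],
        GeodesicSpace X → DeltaHyp X δ →
        (∀ u₁ u₂ u₃ : ℕ → X, IsGromovSeq u₁ → IsGromovSeq u₂ → IsGromovSeq u₃ →
          ∀ x x' : X,
            IsQuasiCentroid 1 0 (10 * δ) x (Sum.inr u₁) (Sum.inr u₂) (Sum.inr u₃) →
            IsQuasiCentroid 1 0 (10 * δ) x' (Sum.inr u₁) (Sum.inr u₂) (Sum.inr u₃) →
            dist x x' ≤ D₀) →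
        ∀ w : ℕ → X, PoleAt L (Sum.inr w) →
        ∀ (v : ℕ → X) (γ : ℝ → X) (I : Set ℝ), IsGromovSeq v →
          IsGeodJoining γ I (Sum.inr w) (Sum.inr v) →
        ∀ a b : ℝ, a ∈ I → b ∈ I → a ≤ b →
          100 * max D₀ (10000 * δ) < b - a →
        (∀ η : ℕ → X, IsGromovSeq η → ∀ p : X,
          IsQuasiCentroid 1 0 (3 * δ) p (Sum.inr η) (Sum.inl (γ a)) (Sum.inl (γ b)) →
          dist p (γ a) ≤ max D₀ (10000 * δ) ∨ dist p (γ b) ≤ max D₀ (10000 * δ)) →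
        ∃ Φ : X → X,
          (∀ x : X, (segProjIn γ a b x (γ a) (3 * max D₀ (10000 * δ)) ∨
              segProjIn γ a b x (γ b) (3 * max D₀ (10000 * δ))) → Φ x = x) ∧
          (∀ u : ℕ → X, IsGromovSeq u → GromovEquiv u (Φ ∘ u)) ∧
          (∀ c : ℝ, (∀ x : X, dist x (Φ x) ≤ c) →
            ((b - a) - 6 * max D₀ (10000 * δ)) / 3 ≤ c) ∧
          (∀ x : X, ∃ x' : X, dist x (Φ x') ≤ L + 3 * δ) ∧
          IsQuasiIsometry K' C' Φ := by
  classical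
  set D := max D₀ (10000 * δ) with hDdef
  have hD10k : 10000 * δ ≤ D := le_max_right _ _
  have hD0 : 0 ≤ D := le_trans (by positivity) hD10k
  set M := L + 3 * δ with hMdef
  have hM0 : 0 ≤ M := by positivity
  refine ⟨3, 20 * (L + δ + D + 1), by norm_num, by nlinarith, ?_⟩
  intro X _ _ geo hyp _Hcent w hpole v γ I _hv hjoin a b _haI _hbI hab hba Hproj
  -- line structure of γ
  obtain ⟨hline, ⟨σγ, hσγ, hwγeq⟩, ⟨σv, hσv, hveq⟩⟩ := lineOf hjoin
  have hw : IsGromovSeq w := hwγeq.2.1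
  have hwγ : ∀ z : X, Tendsto (fun i => gp z (γ (σγ i)) (w i)) atTop atTop := hwγeq.2.2
  -- global closest-point projection to the line γ
  choose tp htp using fun x : X => hline.exists_min x
  have htpline : ∀ t : ℝ, tp (γ t) = t := by
    intro t
    have h1 := htp (γ t) t
    rw [dist_self] at h1
    have h2 : dist (γ t) (γ (tp (γ t))) = |t - tp (γ t)| := hline t _
    have h3 : dist (γ t) (γ (tp (γ t))) = 0 := le_antisymm h1 dist_nonneg
    rw [h3] at h2
    have := abs_eq_zero.1 h2.symm
    linarith
  -- for each point, a pole line through it with the tracking dichotomy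
  have hρclaim : ∀ x : X, ∃ (ρ : ℝ → X) (s₀ : ℝ), dist x (ρ s₀) ≤ L ∧
      ∀ t₀ : ℝ, (∀ t, dist (ρ s₀) (γ t₀) ≤ dist (ρ s₀) (γ t)) →
        a + 2*D < t₀ → t₀ < b - 2*D → dist (ρ s₀) (γ t₀) ≤ 2*δ := by
    intro x
    obtain ⟨ρ, I', v', hv'g, hjoin', s₀, _hs₀I, hxd⟩ := hpole.2 x
    obtain ⟨hρline, ⟨σρ, hσρ, hρweq⟩, ⟨σ'', hσ'', hρv'eq⟩⟩ := lineOf hjoin'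
    exact ⟨ρ, s₀, hxd, fun t₀ hm h1 h2 => claim_rho geo hyp hδ hline hρline hD10k hba
      hw hσγ hwγ hσρ hρweq.2.2 hσ'' hv'g hρv'eq.2.2 Hproj s₀ t₀ hm h1 h2⟩
  set α := a + 3*D with hαdef
  set β := b - 3*D with hβdef
  have hαβ : α < β := by
    simp only [hαdef, hβdef]
    linarith
  -- the tube lemma
  have tube : ∀ y : X, tp y ∈ Ioo α β → dist y (γ (tp y)) ≤ M := by
    intro y hty
    obtain ⟨ρ, s₀, hyρ, hclaim⟩ := hρclaim y
    set ts := tp (ρ s₀) with htsdef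
    rcases em (a + 2*D < ts ∧ ts < b - 2*D) with hmid | hmid
    · have h2δ := hclaim ts (htp _) hmid.1 hmid.2
      calc dist y (γ (tp y)) ≤ dist y (γ ts) := htp y ts
      _ ≤ dist y (ρ s₀) + dist (ρ s₀) (γ ts) := dist_triangle _ _ _
      _ ≤ M := by simp only [hMdef]; linarith
    · -- far case, use F0'
      have hty1 : α < tp y := hty.1
      have hty2 : tp y < β := hty.2
      have hgapD : D < |tp y - ts| := by
        rcases not_and_or.1 hmid with h | h
        · push_neg at h
          have h5 : D < tp y - ts := by
            simp only [hαdef] at hty1; linarith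
          rw [abs_of_pos (by linarith)]; exact h5
        · push_neg at h
          have h5 : D < ts - tp y := by
            simp only [hβdef] at hty2; linarith
          rw [abs_of_neg (by linarith)]; linarith
      have hgap : 13 * δ < |tp y - ts| := by nlinarith
      have hF := F0' geo hyp hδ hline (htp y) (htp (ρ s₀)) hgap
      have hlow : dist y (γ (tp y)) - L ≤ dist (ρ s₀) (γ ts) := by
        have h1 := htp y ts
        have h2 := dist_triangle y (ρ s₀) (γ ts)
        linarith
      simp only [hMdef]
      nlinarith [dist_nonneg (x := y) (y := ρ s₀), hyρ]
  set MoveP : X → Prop := fun x => tp x ∈ Ioo α β with hMovedef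
  set Φ : X → X := fun x => if MoveP x then γ (pushF α β (tp x)) else x with hΦdef
  have hfix : ∀ x, ¬ MoveP x → Φ x = x := by
    intro x h; simp only [hΦdef, if_neg h]
  have hmoveΦ : ∀ x, MoveP x → Φ x = γ (pushF α β (tp x)) := by
    intro x h; simp only [hΦdef, if_pos h]
  -- displacement
  have hamt : ∀ t : ℝ, 0 ≤ pushF α β t - t ∧ pushF α β t - t ≤ (β - α)/3 := by
    intro t
    constructor
    · have := pushF.amt_nonneg (α := α) (β := β) t
      simp only [pushF]; linarith
    · have := pushF.amt_le (α := α) (β := β) hαβ.le t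
      simp only [pushF]; linarith
  have hdisp : ∀ x : X, dist x (Φ x) ≤ M + (β - α)/3 := by
    intro x
    rcases em (MoveP x) with h | h
    · rw [hmoveΦ x h]
      have h1 := dist_triangle x (γ (tp x)) (γ (pushF α β (tp x)))
      have h2 : dist (γ (tp x)) (γ (pushF α β (tp x))) = |tp x - pushF α β (tp x)| :=
        hline _ _
      have h3 := hamt (tp x)
      have h4 : |tp x - pushF α β (tp x)| ≤ (β - α)/3 := by
        rw [abs_of_nonpos (by linarith [h3.1])]; linarith [h3.2]
      have h5 := tube x h
      linarith
    · rw [hfix x h, dist_self]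
      have : 0 < β - α := by linarith
      positivity
  refine ⟨Φ, ?_, ?_, ?_, ?_, ?_⟩
  · -- (1) fixes points projecting near the ends
    intro x hx
    apply hfix
    intro hMove
    have hmemab : tp x ∈ Icc a b := by
      have h1 : α < tp x := hMove.1
      have h2 : tp x < β := hMove.2
      simp only [hαdef] at h1; simp only [hβdef] at h2
      exact ⟨by linarith, by linarith⟩
    rcases hx with hxa | hxb
    · have := hxa (tp x) hmemab (fun t _ => htp x t)
      rw [hline] at this
      rw [abs_of_nonneg (by linarith [hmemab.1])] at this
      have h1 : α < tp x := hMove.1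
      simp only [hαdef] at h1
      linarith
    · have := hxb (tp x) hmemab (fun t _ => htp x t)
      rw [hline] at this
      rw [abs_of_nonpos (by linarith [hmemab.2])] at this
      have h2 : tp x < β := hMove.2
      simp only [hβdef] at h2
      linarith
  · -- (2) identity on the boundary
    intro u hu
    set B := M + (β - α)/3 with hBdef
    have hB0 : 0 ≤ B := le_trans dist_nonneg (hdisp (γ 0))
    refine ⟨hu, ?_, ?_⟩
    · intro z
      rw [Filter.tendsto_atTop]
      intro c
      refine (Filter.tendsto_atTop.mp (hu z) (c + 2*B)).mono fun p hp => ?_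
      have g1 := gp_move_left z (u p.1) (Φ (u p.1)) (u p.2)
      have g2 := gp_move_right z (Φ (u p.1)) (u p.2) (Φ (u p.2))
      have d1 := hdisp (u p.1)
      have d2 := hdisp (u p.2)
      have e1 : dist (u p.1) (Φ (u p.1)) ≤ B := d1
      have e2 : dist (u p.2) (Φ (u p.2)) ≤ B := d2
      show c ≤ gp z (Φ (u p.1)) (Φ (u p.2))
      linarith
    · intro z
      rw [Filter.tendsto_atTop]
      intro c
      have hdg : Tendsto (fun i : ℕ => ((i, i) : ℕ × ℕ)) atTop atTop := by
        rw [Filter.tendsto_atTop]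
        intro p
        refine Filter.eventually_atTop.2 ⟨max p.1 p.2, fun i hi => ?_⟩
        exact Prod.mk_le_mk.2 ⟨le_trans (le_max_left _ _) hi, le_trans (le_max_right _ _) hi⟩
      have hdiag : Tendsto (fun i => gp z (u i) (u i)) atTop atTop := (hu z).comp hdg
      refine (Filter.tendsto_atTop.mp hdiag (c + B)).mono fun i hi => ?_
      rw [gp_self] at hi
      have h1 := gp_ge_sub z (u i) (Φ (u i))
      have h2 := hdisp (u i)
      show c ≤ gp z (u i) (Φ (u i))
      linarith
  · -- (3) displacement at least (b - a - 6D)/3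
    intro c hc
    set mid := (α + β)/2 with hmiddef
    have hmidmem : mid ∈ Ioo α β := ⟨by simp only [hmiddef]; linarith, by simp only [hmiddef]; linarith⟩
    have hMoveMid : MoveP (γ mid) := by
      simp only [hMovedef]
      rw [htpline]
      exact hmidmem
    have hcm := hc (γ mid)
    rw [hmoveΦ _ hMoveMid, htpline] at hcm
    rw [hline, pushF.mid_val hαβ.le] at hcm
    have habs : |mid - (mid + (β - α)/3)| = (β - α)/3 := by
      rw [show mid - (mid + (β - α)/3) = -((β - α)/3) by ring, abs_neg,
        abs_of_nonneg (by linarith)]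
    rw [hmiddef] at hcm
    rw [← hmiddef] at hcm
    rw [habs] at hcm
    have : (β - α) = (b - a) - 6*D := by simp only [hαdef, hβdef]; ring
    linarith
  · -- (4) roughly full image
    intro x
    obtain ⟨ρ, s₀, hxρ, hclaim⟩ := hρclaim x
    set ts := tp (ρ s₀) with htsdef
    rcases em (a + 2*D < ts ∧ ts < b - 2*D) with hmid | hmid
    · have h2δ := hclaim ts (htp _) hmid.1 hmid.2
      have hxts : dist x (γ ts) ≤ L + 2*δ := by
        calc dist x (γ ts) ≤ dist x (ρ s₀) + dist (ρ s₀) (γ ts) := dist_triangle _ _ _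
        _ ≤ L + 2*δ := by linarith
      rcases em (ts ∈ Ioo α β) with hIoo | hIoo
      · obtain ⟨t', ht'I, ht'f⟩ := pushF.surj hαβ hIoo
        refine ⟨γ t', ?_⟩
        have hMt' : MoveP (γ t') := by
          simp only [hMovedef]; rw [htpline]; exact ht'I
        rw [hmoveΦ _ hMt', htpline, ht'f]
        linarith
      · refine ⟨γ ts, ?_⟩
        have hnM : ¬ MoveP (γ ts) := by
          simp only [hMovedef]; rw [htpline]; exact hIoo
        rw [hfix _ hnM]
        linarith
    · refine ⟨ρ s₀, ?_⟩
      have hnM : ¬ MoveP (ρ s₀) := by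
        intro hM
        have h1 : α < ts := hM.1
        have h2 : ts < β := hM.2
        simp only [hαdef] at h1; simp only [hβdef] at h2
        exact hmid ⟨by linarith, by linarith⟩
      rw [hfix _ hnM]
      linarith
  · -- (5) quasi-isometry
    have hmixed : ∀ x y : X, MoveP x → ¬ MoveP y →
        dist (γ (pushF α β (tp x))) y ≤ (5/3) * dist x y + (4*M + 3*δ) ∧
        (1/3) * dist x y - (4*M + 3*δ) ≤ dist (γ (pushF α β (tp x))) y := by
      intro x y hx hy
      have hdx : dist x (γ (tp x)) ≤ M := tube x hx
      have hF1 := F1 geo hyp hδ hline (htp x) (htp y)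
      have hamty : pushF α β (tp y) = tp y := by
        apply pushF.eq_self_of_out
        rcases em (tp y ≤ α) with h | h
        · exact Or.inl h
        · right
          rcases le_or_gt β (tp y) with h' | h'
          · exact h'
          · exact absurd ⟨lt_of_not_ge h, h'⟩ hy
      have hamtx : pushF α β (tp x) - tp x ≤ (2/3) * |tp x - tp y| := by
        have := pushF.amt_lip (α := α) (β := β) (tp x) (tp y)
        have hzero : (2/3) * max 0 (min (tp y - α) (β - tp y)) = 0 := by
          have : pushF α β (tp y) = tp y := hamty
          simp only [pushF] at this
          linarith
        rw [hzero, sub_zero] at this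
        have h1 : pushF α β (tp x) - tp x = (2/3) * max 0 (min (tp x - α) (β - tp x)) := by
          simp only [pushF]; ring
        rw [h1]
        exact le_trans (le_abs_self _) this
      have hamtx0 : 0 ≤ pushF α β (tp x) - tp x := (hamt (tp x)).1
      have hdxΦ : dist x (γ (pushF α β (tp x))) ≤ M + (2/3) * (dist x y + 4*δ) := by
        have h1 := dist_triangle x (γ (tp x)) (γ (pushF α β (tp x)))
        have h2 : dist (γ (tp x)) (γ (pushF α β (tp x))) = |tp x - pushF α β (tp x)| :=
          hline _ _
        have h3 : |tp x - pushF α β (tp x)| = pushF α β (tp x) - tp x := by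
          rw [abs_of_nonpos (by linarith)]; ring
        have h4 : |tp x - tp y| ≤ dist x y + 4*δ := hF1
        have h5 : pushF α β (tp x) - tp x ≤ (2/3) * (dist x y + 4*δ) := by
          calc pushF α β (tp x) - tp x ≤ (2/3) * |tp x - tp y| := hamtx
          _ ≤ (2/3) * (dist x y + 4*δ) := by linarith
        rw [h2, h3] at h1
        linarith
      constructor
      · have h1 := dist_triangle (γ (pushF α β (tp x))) x y
        have h2 : dist (γ (pushF α β (tp x))) x = dist x (γ (pushF α β (tp x))) :=
          dist_comm _ _
        rw [h2] at h1
        have := dist_nonneg (x := x) (y := y)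
        simp only [hMdef] at *
        linarith
      · have h1 := dist_triangle x (γ (pushF α β (tp x))) y
        have h2 : dist (γ (pushF α β (tp x))) y ≥ dist x y - dist x (γ (pushF α β (tp x))) := by
          linarith
        simp only [hMdef] at *
        linarith
    have key : ∀ x y : X, dist (Φ x) (Φ y) ≤ (5/3) * dist x y + (4*M + 3*δ) ∧
        (1/3) * dist x y - (4*M + 3*δ) ≤ dist (Φ x) (Φ y) := by
      intro x y
      rcases em (MoveP x) with hx | hx <;> rcases em (MoveP y) with hy | hy
      · -- both move
        rw [hmoveΦ _ hx, hmoveΦ _ hy]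
        have hdx : dist x (γ (tp x)) ≤ M := tube x hx
        have hdy : dist y (γ (tp y)) ≤ M := tube y hy
        have hγγ : dist (γ (tp x)) (γ (tp y)) = |tp x - tp y| := hline _ _
        have hΔub : |tp x - tp y| ≤ dist x y + 2*M := by
          have h1 := dist_triangle (γ (tp x)) x (γ (tp y))
          have h2 := dist_triangle x y (γ (tp y))
          have h3 : dist (γ (tp x)) x = dist x (γ (tp x)) := dist_comm _ _
          linarith [hγγ]
        have hΔlb : dist x y - 2*M ≤ |tp x - tp y| := by
          have h1 := dist_triangle x (γ (tp x)) y
          have h2 := dist_triangle (γ (tp x)) (γ (tp y)) y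
          have h3 : dist (γ (tp y)) y = dist y (γ (tp y)) := dist_comm _ _
          linarith [hγγ]
        have hb := pushF.dist_bounds (α := α) (β := β) (tp x) (tp y)
        have hfγ : dist (γ (pushF α β (tp x))) (γ (pushF α β (tp y))) =
            |pushF α β (tp x) - pushF α β (tp y)| := hline _ _
        rw [hfγ]
        constructor
        · calc |pushF α β (tp x) - pushF α β (tp y)| ≤ (5/3) * |tp x - tp y| := hb.2
          _ ≤ (5/3) * (dist x y + 2*M) := by linarith
          _ ≤ (5/3) * dist x y + (4*M + 3*δ) := by simp only [hMdef] at *; nlinarith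
        · calc (1/3) * dist x y - (4*M + 3*δ) ≤ (1/3) * (|tp x - tp y| + 2*M) - (4*M + 3*δ) := by linarith
          _ ≤ (1/3) * |tp x - tp y| := by simp only [hMdef] at *; nlinarith
          _ ≤ |pushF α β (tp x) - pushF α β (tp y)| := hb.1
      · rw [hmoveΦ _ hx, hfix _ hy]
        exact hmixed x y hx hy
      · rw [hfix _ hx, hmoveΦ _ hy]
        have := hmixed y x hy hx
        rw [dist_comm x y, dist_comm x (γ (pushF α β (tp y)))]
        exact ⟨this.1, this.2⟩
      · rw [hfix _ hx, hfix _ hy]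
        have := dist_nonneg (x := x) (y := y)
        constructor
        · simp only [hMdef]; nlinarith
        · simp only [hMdef]; nlinarith
    have hC'big : 4*M + 3*δ ≤ 20 * (L + δ + D + 1) := by
      simp only [hMdef]; nlinarith
    refine ⟨⟨by norm_num, by nlinarith, fun x y => ?_⟩, fun y => ?_⟩
    · obtain ⟨hub, hlb⟩ := key x y
      have h3 : ((3:ℝ))⁻¹ = 1/3 := by norm_num
      constructor
      · rw [h3]
        linarith
      · have := dist_nonneg (x := x) (y := y)
        nlinarith
    · -- coarse density from (4) — reprove quickly
      obtain ⟨ρ, s₀, hxρ, hclaim⟩ := hρclaim y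
      set ts := tp (ρ s₀) with htsdef
      rcases em (a + 2*D < ts ∧ ts < b - 2*D) with hmid | hmid
      · have h2δ := hclaim ts (htp _) hmid.1 hmid.2
        have hxts : dist y (γ ts) ≤ L + 2*δ := by
          calc dist y (γ ts) ≤ dist y (ρ s₀) + dist (ρ s₀) (γ ts) := dist_triangle _ _ _
          _ ≤ L + 2*δ := by linarith
        rcases em (ts ∈ Ioo α β) with hIoo | hIoo
        · obtain ⟨t', ht'I, ht'f⟩ := pushF.surj hαβ hIoo
          refine ⟨γ t', ?_⟩
          have hMt' : MoveP (γ t') := by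
            simp only [hMovedef]; rw [htpline]; exact ht'I
          rw [hmoveΦ _ hMt', htpline, ht'f]
          nlinarith
        · refine ⟨γ ts, ?_⟩
          have hnM : ¬ MoveP (γ ts) := by
            simp only [hMovedef]; rw [htpline]; exact hIoo
          rw [hfix _ hnM]
          nlinarith
      · refine ⟨ρ s₀, ?_⟩
        have hnM : ¬ MoveP (ρ s₀) := by
          intro hM
          have h1 : α < ts := hM.1
          have h2 : ts < β := hM.2
          simp only [hαdef] at h1; simp only [hβdef] at h2
          exact hmid ⟨by linarith, by linarith⟩
        rw [hfix _ hnM]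
        nlinarith

end BoundaryRigidity
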